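/- arXiv:0706.1326 — 9 statements merged into one kernel-verified Lean document; each statement's English description precedes it below -/
import Mathlib

section
/- Every complete separable ultrahomogeneous metric space contains a countable dense subspace which is itself an ultrahomogeneous metric space. -/
open Metric

/-- A metric space is ultrahomogeneous if every isometry between two finite
subspaces extends to a surjective self-isometry of the whole space. -/
def IsUltrahomogeneous (X : Type*) [MetricSpace X] : Prop :=
  ∀ F : Set X, F.Finite → ∀ φ : F → X, Isometry φ →
    ∃ ψ : X ≃ᵢ X, ∀ x : F, ψ x = φ x

/-- A metric space `X` is `ε`-indivisible if for every finite coloring there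
is a color `i` and a subset `Y ⊆ X` isometric to `X` with every point of `Y`
within distance `ε` of the `i`-th color class. -/
def EpsIndivisible (X : Type*) [MetricSpace X] (ε : ℝ) : Prop :=
  ∀ k : ℕ, 0 < k → ∀ χ : X → Fin k, ∃ i : Fin k, ∃ e : X → X, Isometry e ∧
    ∀ z : X, ∃ x : X, χ x = i ∧ dist (e z) x ≤ ε

/-- Approximate indivisibility (oscillation stability): `ε`-indivisible for
every `ε > 0`. -/
def ApproxIndivisible (X : Type*) [MetricSpace X] : Prop :=
  ∀ ε : ℝ, 0 < ε → EpsIndivisible X ε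

/-- Exact indivisibility: some color class contains an isometric copy of `X`. -/
def Indivisible (X : Type*) [MetricSpace X] : Prop :=
  ∀ k : ℕ, 0 < k → ∀ χ : X → Fin k, ∃ i : Fin k, ∃ e : X → X, Isometry e ∧
    ∀ z : X, χ (e z) = i

/-- The Urysohn sphere: complete, separable, ultrahomogeneous, of diameter at
most `1`, and universal for separable metric spaces of diameter at most `1`. -/
def IsUrysohnSphere (S : Type) [MetricSpace S] : Prop :=
  CompleteSpace S ∧ TopologicalSpace.SeparableSpace S ∧ IsUltrahomogeneous S ∧
  (∀ x y : S, dist x y ≤ 1) ∧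
  ∀ (Y : Type) [MetricSpace Y], TopologicalSpace.SeparableSpace Y →
    (∀ a b : Y, dist a b ≤ 1) → ∃ f : Y → S, Isometry f

/-- The rational Urysohn sphere: countable, ultrahomogeneous, with distances in
`ℚ ∩ [0,1]`, universal for countable metric spaces with distances in `ℚ ∩ [0,1]`. -/
def IsRationalUrysohnSphere (S : Type) [MetricSpace S] : Prop :=
  Countable S ∧ IsUltrahomogeneous S ∧
  (∀ x y : S, ∃ q : ℚ, 0 ≤ q ∧ q ≤ 1 ∧ dist x y = q) ∧
  ∀ (Y : Type) [MetricSpace Y], Countable Y →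
    (∀ a b : Y, ∃ q : ℚ, 0 ≤ q ∧ q ≤ 1 ∧ dist a b = q) →
    ∃ f : Y → S, Isometry f

/-- `[0,1]_m = {k/m : 0 ≤ k ≤ m}`. -/
def distSetM (m : ℕ) : Set ℝ := {d | ∃ k : ℕ, k ≤ m ∧ d = (k : ℝ) / m}

/-- The space `S_m`: countable, ultrahomogeneous, with distances in `[0,1]_m`,
universal for countable metric spaces with distances in `[0,1]_m`. -/
def IsUrysohnSphereM (m : ℕ) (S : Type) [MetricSpace S] : Prop :=
  Countable S ∧ IsUltrahomogeneous S ∧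
  (∀ x y : S, dist x y ∈ distSetM m) ∧
  ∀ (Y : Type) [MetricSpace Y], Countable Y →
    (∀ a b : Y, dist a b ∈ distSetM m) → ∃ f : Y → S, Isometry f

/-! Start from a countable dense set `D` and close it under chosen global extensions of all
finite partial isometries between points already obtained, together with their inverses.
After `ω` rounds the resulting countable set `Y` is invariant under the chosen extension of
every finite partial isometry of `Y`, so that extension restricts to a self-isometry of `Y`. -/

section PermClosure

variable {α : Type*} (ψ : Set (α × α) → Equiv.Perm α)

def permClosureStep (S : Set α) : Set α :=
  S ∪ ⋃ P ∈ {P : Set (α × α) | P.Finite ∧ P ⊆ S ×ˢ S}, (ψ P '' S ∪ (ψ P).symm '' S)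

def permClosure (D : Set α) : Set α :=
  ⋃ n, (permClosureStep ψ)^[n] D

theorem subset_permClosureStep (S : Set α) : S ⊆ permClosureStep ψ S :=
  Set.subset_union_left

theorem Set.Countable.permClosureStep {S : Set α} (hS : S.Countable) :
    (permClosureStep ψ S).Countable :=
  hS.union <| (Set.countable_ofPred_finite_subset (hS.prod hS)).biUnion fun _ _ =>
    (hS.image _).union (hS.image _)

theorem monotone_iterate_permClosureStep (D : Set α) :
    Monotone fun n => (permClosureStep ψ)^[n] D :=
  monotone_nat_of_le_succ fun n => by
    simpa only [Function.iterate_succ_apply'] using subset_permClosureStep ψ _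

theorem subset_permClosure (D : Set α) : D ⊆ permClosure ψ D :=
  Set.subset_iUnion (fun n => (permClosureStep ψ)^[n] D) 0

theorem Set.Countable.permClosure {D : Set α} (hD : D.Countable) :
    (permClosure ψ D).Countable :=
  Set.countable_iUnion fun n => by
    induction n with
    | zero => exact hD
    | succ n ih =>
      rw [Function.iterate_succ_apply']
      exact ih.permClosureStep ψ

theorem mapsTo_permClosure {D : Set α} {P : Set (α × α)} (hP : P.Finite)
    (hPD : P ⊆ permClosure ψ D ×ˢ permClosure ψ D) {x : α} (hx : x ∈ permClosure ψ D) :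
    ψ P x ∈ permClosure ψ D ∧ (ψ P).symm x ∈ permClosure ψ D := by
  set S := fun n => (permClosureStep ψ)^[n] D
  have hS : Monotone S := monotone_iterate_permClosureStep ψ D
  obtain ⟨m, hm⟩ : ∃ m, P ⊆ S m ×ˢ S m := by
    have hSS : Monotone fun n => S n ×ˢ S n := fun a b h => Set.prod_mono (hS h) (hS h)
    simpa using hSS.directed_le.exists_mem_subset_of_finset_subset_biUnion (s := hP.toFinset)
      (by rw [Set.Finite.coe_toFinset, Set.iUnion_prod_of_monotone hS hS]; exact hPD)
  obtain ⟨k, hk⟩ := Set.mem_iUnion.1 hx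
  have hstep : P ∈ {P : Set (α × α) | P.Finite ∧ P ⊆ S (max m k) ×ˢ S (max m k)} :=
    ⟨hP, hm.trans (Set.prod_mono (hS (le_max_left m k)) (hS (le_max_left m k)))⟩
  have hxS : x ∈ S (max m k) := hS (le_max_right m k) hk
  have hsucc : permClosureStep ψ (S (max m k)) ⊆ permClosure ψ D := by
    rw [← Function.iterate_succ_apply' (permClosureStep ψ)]
    exact Set.subset_iUnion S _
  exact ⟨hsucc <| Or.inr <| Set.mem_biUnion hstep <| Or.inl ⟨x, hxS, rfl⟩,
    hsucc <| Or.inr <| Set.mem_biUnion hstep <| Or.inr ⟨x, hxS, rfl⟩⟩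

theorem mem_permClosure_iff_apply_mem {D : Set α} {P : Set (α × α)} (hP : P.Finite)
    (hPD : P ⊆ permClosure ψ D ×ˢ permClosure ψ D) (x : α) :
    x ∈ permClosure ψ D ↔ ψ P x ∈ permClosure ψ D :=
  ⟨fun hx => (mapsTo_permClosure ψ hP hPD hx).1, fun hx => by
    simpa using (mapsTo_permClosure ψ hP hPD hx).2⟩

end PermClosure

def IsometryEquiv.subtypeEquiv {X Y : Type*} [PseudoEMetricSpace X] [PseudoEMetricSpace Y]
    (e : X ≃ᵢ Y) {p : X → Prop} {q : Y → Prop} (h : ∀ x, p x ↔ q (e x)) :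
    {x // p x} ≃ᵢ {y // q y} where
  toEquiv := e.toEquiv.subtypeEquiv h
  isometry_toFun _ _ := e.edist_eq _ _

theorem IsUltrahomogeneous.exists_isometryEquiv_forall_mem_apply_eq {X : Type*}
    [MetricSpace X] (hX : IsUltrahomogeneous X) {P : Set (X × X)} (hP : P.Finite)
    (hd : ∀ p ∈ P, ∀ q ∈ P, dist p.2 q.2 = dist p.1 q.1) :
    ∃ g : X ≃ᵢ X, ∀ p ∈ P, g p.1 = p.2 := by
  choose! pr hprP hpr₁ using fun x (hx : x ∈ Prod.fst '' P) => hx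
  let φ : Prod.fst '' P → X := fun x => (pr x).2
  have hφ : Isometry φ := Isometry.of_dist_eq fun x y => by
    rw [hd _ (hprP x x.2) _ (hprP y y.2), hpr₁ x x.2, hpr₁ y y.2]
    rfl
  obtain ⟨g, hg⟩ := hX _ (hP.image _) φ hφ
  refine ⟨g, fun p hp => ?_⟩
  have hpF : p.1 ∈ Prod.fst '' P := Set.mem_image_of_mem _ hp
  rw [hg ⟨p.1, hpF⟩]
  -- the pairs in `P` form a function, since `P` preserves distances
  refine dist_eq_zero.1 ?_
  rw [hd _ (hprP _ hpF) _ hp, hpr₁ _ hpF, dist_self]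

theorem IsUltrahomogeneous.exists_extension_choice {X : Type*} [MetricSpace X]
    (hX : IsUltrahomogeneous X) :
    ∃ ψ : Set (X × X) → X ≃ᵢ X, ∀ P : Set (X × X), P.Finite →
      (∀ p ∈ P, ∀ q ∈ P, dist p.2 q.2 = dist p.1 q.1) → ∀ p ∈ P, ψ P p.1 = p.2 := by
  classical
  refine ⟨fun P => if h : P.Finite ∧ ∀ p ∈ P, ∀ q ∈ P, dist p.2 q.2 = dist p.1 q.1 then
    (hX.exists_isometryEquiv_forall_mem_apply_eq h.1 h.2).choose else .refl X,
    fun P hP hd => ?_⟩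
  dsimp only
  rw [dif_pos ⟨hP, hd⟩]
  exact (hX.exists_isometryEquiv_forall_mem_apply_eq hP hd).choose_spec

theorem stmt0_general (X : Type) [MetricSpace X]
    [TopologicalSpace.SeparableSpace X] (hX : IsUltrahomogeneous X) :
    ∃ Y : Set X, Y.Countable ∧ Dense Y ∧ IsUltrahomogeneous Y := by
  obtain ⟨D, hDc, hDd⟩ := TopologicalSpace.exists_countable_dense X
  obtain ⟨ψ, hψ⟩ := hX.exists_extension_choice
  set Y := permClosure (fun P => (ψ P).toEquiv) D
  refine ⟨Y, hDc.permClosure _, hDd.mono (subset_permClosure _ D), fun F hF φ hφ => ?_⟩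
  have := hF.to_subtype
  let P : Set (X × X) := Set.range fun x : F => ((x : X), (φ x : X))
  have hPfin : P.Finite := Set.finite_range _
  have hPY : P ⊆ Y ×ˢ Y := Set.range_subset_iff.2 fun x => ⟨x.1.2, (φ x).2⟩
  have hPdist : ∀ p ∈ P, ∀ q ∈ P, dist p.2 q.2 = dist p.1 q.1 := by
    rintro _ ⟨x, rfl⟩ _ ⟨y, rfl⟩
    exact hφ.dist_eq x y
  refine ⟨(ψ P).subtypeEquiv (mem_permClosure_iff_apply_mem _ hPfin hPY), fun x => ?_⟩
  exact Subtype.ext (hψ P hPfin hPdist _ ⟨x, rfl⟩)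

/-- Every complete separable ultrahomogeneous metric space contains a countable
dense subspace which is itself an ultrahomogeneous metric space. -/
theorem stmt0 (X : Type) [MetricSpace X] [CompleteSpace X]
    [TopologicalSpace.SeparableSpace X] (hX : IsUltrahomogeneous X) :
    ∃ Y : Set X, Y.Countable ∧ Dense Y ∧ IsUltrahomogeneous Y :=
  stmt0_general X hX
end

section
/- Let m be a positive integer, let S be a Urysohn sphere, and let S_m be a countable ultrahomogeneous metric space with all distances in [0,1]_m into which every countable metric space with distances in [0,1]_m embeds isometrically. Then there exists an isometric embedding φ : S_m → S such that every point of S lies within distance 1/m of the image φ(S_m). -/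
open Metric

/-!
Grow a finite partial isometry `S_m ⇀ S` along an enumeration of `S_m` and of a countable dense
set `D ⊆ S` (Rasiowa–Sikorski). A new point of `S_m` gets an image because `S` realizes every
Katětov function on a finite set. A point `z ∈ D` is handled by rounding its distances to the
current range to the grid `[0,1]_m`: the rounded function is still Katětov, so it is realized by
some `x ∈ S_m` and, together with distance `≤ 1/(2m)` to `z`, by some `w ∈ S`; the pair `(x, w)`
is added. So every point of `S` is within `1/(2m) + 1/(2m)` of the image.

Katětov functions are realized by embedding a finite one-point extension, built from Kuratowski
coordinates, and moving it back into place by ultrahomogeneity.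
-/

section Rounding

variable {α : Type*} [Field α] [LinearOrder α] [IsStrictOrderedRing α] [FloorRing α]

theorem abs_round_sub_round_le {x y : α} {k : ℤ} (h : |x - y| ≤ k) : |round x - round y| ≤ k := by
  have key : ∀ x y : α, x - y ≤ k → round x - round y ≤ k := fun x y h => by
    have hx := round_le_add_half x
    have hy := sub_half_lt_round y
    have : ((round x - round y : ℤ) : α) < k + 1 := by push_cast; linarith
    exact Int.lt_add_one_iff.mp (by exact_mod_cast this)
  rw [abs_le] at h ⊢
  exact ⟨by linarith [key y x (by linarith)], key x y h.2⟩

theorem le_round_add_round {x y : α} {k : ℤ} (h : (k : α) ≤ x + y) : k ≤ round x + round y := by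
  have hx := sub_half_lt_round x
  have hy := sub_half_lt_round y
  have : ((k - 1 : ℤ) : α) < round x + round y := by push_cast; linarith
  exact Int.sub_one_lt_iff.mp (by exact_mod_cast this)

end Rounding

theorem le_one_of_mem_distSetM {n : ℕ} (hn : 0 < n) {d : ℝ} (h : d ∈ distSetM n) : d ≤ 1 := by
  obtain ⟨k, hk, rfl⟩ := h
  rw [div_le_one (by exact_mod_cast hn)]
  exact_mod_cast hk

section GridRounding

variable {m : ℝ}

theorem round_mul_div_sub (hm : 0 < m) (a : ℝ) :
    round (m * a) / m - a = (round (m * a) - m * a) / m := by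
  field_simp

theorem abs_round_mul_div_sub_le (hm : 0 < m) (a : ℝ) :
    |round (m * a) / m - a| ≤ 1 / (2 * m) := by
  rw [round_mul_div_sub hm, abs_div, abs_of_pos hm, abs_sub_comm,
    div_le_div_iff₀ hm (by positivity)]
  nlinarith [abs_sub_round (m * a)]

theorem abs_round_mul_div_sub_le_abs_sub (hm : 0 < m) (a : ℝ) (k : ℤ) :
    |round (m * a) / m - a| ≤ |a - k / m| := by
  rw [round_mul_div_sub hm, show a - k / m = (m * a - k) / m by field_simp, abs_div, abs_div,
    abs_sub_comm]
  exact div_le_div_of_nonneg_right (round_le (m * a) k) (abs_nonneg m)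

theorem round_mul_div_mem_distSetM {n : ℕ} {a : ℝ} (h0 : 0 ≤ a) (h1 : a ≤ 1) :
    (round ((n : ℝ) * a) : ℝ) / n ∈ distSetM n := by
  have hna₀ : 0 ≤ (n : ℝ) * a := mul_nonneg n.cast_nonneg h0
  have hna₁ : (n : ℝ) * a ≤ n := mul_le_of_le_one_right n.cast_nonneg h1
  have hlo : (0 : ℤ) ≤ round ((n : ℝ) * a) := by
    have := sub_half_lt_round ((n : ℝ) * a)
    have : ((-1 : ℤ) : ℝ) < round ((n : ℝ) * a) := by push_cast; linarith
    exact Int.lt_iff_add_one_le.mp (by exact_mod_cast this)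
  have hhi : round ((n : ℝ) * a) ≤ n := by
    have := round_le_add_half ((n : ℝ) * a)
    have : ((round ((n : ℝ) * a) : ℤ) : ℝ) < (n : ℤ) + 1 := by push_cast; linarith
    exact Int.lt_add_one_iff.mp (by exact_mod_cast this)
  refine ⟨(round ((n : ℝ) * a)).toNat, by omega, ?_⟩
  rw [show ((round ((n : ℝ) * a)).toNat : ℝ) = (round ((n : ℝ) * a) : ℝ) by
    exact_mod_cast Int.toNat_of_nonneg hlo]

end GridRounding

section Katetov

variable {X : Type*} [PseudoMetricSpace X] {ι : Type*} {p : ι → X} {r : ι → ℝ}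

/-- `r` is a Katětov function on `p`: a possible distance profile of a point added to `p`. -/
def IsKatetov (p : ι → X) (r : ι → ℝ) : Prop :=
  ∀ i j, |r i - r j| ≤ dist (p i) (p j) ∧ dist (p i) (p j) ≤ r i + r j

theorem IsKatetov.nonneg (hr : IsKatetov p r) (i : ι) : 0 ≤ r i := by
  have := (hr i i).2
  rw [dist_self] at this
  linarith

theorem IsKatetov.congr {Y : Type*} [PseudoMetricSpace Y] {q : ι → Y} (hr : IsKatetov p r)
    (hpq : ∀ i j, dist (p i) (p j) = dist (q i) (q j)) : IsKatetov q r :=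
  fun i j => hpq i j ▸ hr i j

def kuratowski (p : ι → X) (x : X) : ι → ℝ := fun k => dist x (p k)

theorem isKatetov_kuratowski (p : ι → X) (x : X) : IsKatetov p (kuratowski p x) := fun i j => by
  simp only [kuratowski, dist_comm x]
  exact ⟨abs_dist_sub_le _ _ _, dist_triangle_right _ _ _⟩

theorem IsKatetov.option (hr : IsKatetov p r) {z : X} {c : ℝ} (hc : 0 ≤ c)
    (hz : ∀ i, |c - r i| ≤ dist z (p i) ∧ dist z (p i) ≤ c + r i) :
    IsKatetov (fun o : Option ι => o.elim z p) (fun o => o.elim c r) := by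
  rintro (_ | i) (_ | j)
  · simp only [Option.elim, sub_self, abs_zero, dist_self]
    constructor <;> linarith
  · exact hz j
  · rw [dist_comm, abs_sub_comm, add_comm]
    exact hz i
  · exact hr i j

noncomputable def gridRound (m : ℝ) (f : ι → ℝ) : ι → ℝ := fun i => round (m * f i) / m

theorem IsKatetov.gridRound {m : ℝ} (hm : 0 < m)
    (hp : ∀ i j, ∃ k : ℤ, dist (p i) (p j) = k / m) (hr : IsKatetov p r) :
    IsKatetov p (gridRound m r) := by
  intro i j
  obtain ⟨k, hk⟩ := hp i j
  obtain ⟨hsub, hadd⟩ := hr i j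
  rw [hk] at hsub hadd ⊢
  have hsub' : |m * r i - m * r j| ≤ k := by
    rwa [← mul_sub, abs_mul, abs_of_pos hm, ← le_div_iff₀' hm]
  have hadd' : (k : ℝ) ≤ m * r i + m * r j := by
    rwa [← mul_add, ← div_le_iff₀' hm]
  have hround : |(round (m * r i) : ℝ) - round (m * r j)| ≤ k ∧
      (k : ℝ) ≤ round (m * r i) + round (m * r j) :=
    ⟨by exact_mod_cast abs_round_sub_round_le hsub', by exact_mod_cast le_round_add_round hadd'⟩
  simp only [_root_.gridRound]
  rw [← sub_div, ← add_div, abs_div, abs_of_pos hm]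
  exact ⟨div_le_div_of_nonneg_right hround.1 hm.le, div_le_div_of_nonneg_right hround.2 hm.le⟩

theorem dist_gridRound_le [Fintype ι] {m : ℝ} (hm : 0 < m) (f : ι → ℝ) :
    dist (gridRound m f) f ≤ 1 / (2 * m) :=
  (dist_pi_le_iff (by positivity)).2 fun i =>
    (Real.dist_eq _ _).trans_le (abs_round_mul_div_sub_le hm _)

theorem isKatetov_option_gridRound [Fintype ι] {m : ℝ} (hm : 0 < m)
    (hp : ∀ i j, ∃ k : ℤ, dist (p i) (p j) = k / m) (z : X) :
    let a := kuratowski p z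
    let ρ := gridRound m a
    IsKatetov (fun o : Option ι => o.elim z p) (fun o => o.elim (dist ρ a) ρ) := by
  intro a ρ
  have hρ : IsKatetov p ρ := (isKatetov_kuratowski p z).gridRound hm hp
  have hρa : ∀ i, |ρ i - a i| ≤ dist ρ a := fun i => by
    rw [← Real.dist_eq]; exact dist_le_pi_dist ρ a i
  -- `ρ j` is the grid point nearest to `a j`, and `dist (p j) (p i)` is a grid point.
  have hca : ∀ i, dist ρ a ≤ a i + ρ i := fun i =>
    (dist_pi_le_iff (add_nonneg dist_nonneg (hρ.nonneg i))).2 fun j => by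
      obtain ⟨k, hk⟩ := hp j i
      calc dist (ρ j) (a j) = |ρ j - a j| := Real.dist_eq _ _
        _ ≤ |a j - dist (p j) (p i)| := by
          rw [hk]; exact abs_round_mul_div_sub_le_abs_sub hm _ k
        _ ≤ a i := by rw [dist_comm (p j)]; exact abs_dist_sub_le _ _ _
        _ ≤ a i + ρ i := le_add_of_nonneg_right (hρ.nonneg i)
  refine hρ.option dist_nonneg fun i => ?_
  change |dist ρ a - ρ i| ≤ a i ∧ a i ≤ dist ρ a + ρ i
  have := abs_le.mp (hρa i)
  exact ⟨abs_le.mpr ⟨by linarith, by linarith [hca i]⟩, by linarith⟩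

end Katetov

section KatetovExtension

variable {X : Type*} [PseudoMetricSpace X] {ι : Type*} [Fintype ι] {p : ι → X} {r : ι → ℝ}

theorem dist_pi_eq_of_forall_abs_sub_le {f g : ι → ℝ} {c : ℝ} (hle : ∀ k, |f k - g k| ≤ c)
    (heq : ∃ k, |f k - g k| = c) : dist f g = c := by
  obtain ⟨k, hk⟩ := heq
  refine le_antisymm ((dist_pi_le_iff (hk ▸ abs_nonneg _)).2 fun l => ?_) ?_
  · rw [Real.dist_eq]; exact hle l
  · rw [← hk, ← Real.dist_eq]; exact dist_le_pi_dist f g k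

theorem dist_kuratowski (p : ι → X) (i j : ι) :
    dist (kuratowski p (p i)) (kuratowski p (p j)) = dist (p i) (p j) :=
  dist_pi_eq_of_forall_abs_sub_le (fun k => abs_dist_sub_le _ _ _)
    ⟨j, by rw [kuratowski, kuratowski, dist_self, sub_zero, abs_dist]⟩

theorem IsKatetov.dist_kuratowski_eq (hr : IsKatetov p r) (i : ι) :
    dist r (kuratowski p (p i)) = r i := by
  refine dist_pi_eq_of_forall_abs_sub_le (fun k => abs_le.mpr ⟨?_, ?_⟩)
    ⟨i, by rw [kuratowski, dist_self, sub_zero, abs_of_nonneg (hr.nonneg i)]⟩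
  all_goals unfold kuratowski
  · linarith [(hr i k).2]
  · linarith [(abs_le.mp (hr k i).1).2, dist_comm (p i) (p k)]

/-- The point `r` next to the Kuratowski images of the `p i`, in the sup metric: a finite metric
space in which `r` realizes the one-point extension of `p` prescribed by `r`. -/
def katetovExtension (p : ι → X) (r : ι → ℝ) : Set (ι → ℝ) :=
  insert r (Set.range (kuratowski p ∘ p))

instance (p : ι → X) (r : ι → ℝ) : Finite (katetovExtension p r) :=
  Finite.Set.finite_insert _ _

theorem IsKatetov.dist_mem_of_mem_katetovExtension (hr : IsKatetov p r) {D : Set ℝ} (h0 : 0 ∈ D)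
    (hrD : ∀ i, r i ∈ D) (hpD : ∀ i j, dist (p i) (p j) ∈ D) {a b : ι → ℝ}
    (ha : a ∈ katetovExtension p r) (hb : b ∈ katetovExtension p r) : dist a b ∈ D := by
  rcases ha with rfl | ⟨i, rfl⟩ <;> rcases hb with rfl | ⟨j, rfl⟩
  · rwa [dist_self]
  · rw [Function.comp_apply, hr.dist_kuratowski_eq]; exact hrD j
  · rw [dist_comm, Function.comp_apply, hr.dist_kuratowski_eq]; exact hrD i
  · rw [Function.comp_apply, Function.comp_apply, dist_kuratowski]; exact hpD i j

end KatetovExtension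

section Ultrahomogeneous

variable {X : Type*} [MetricSpace X] {ι : Type*}

theorem IsUltrahomogeneous.exists_dist_eq (hX : IsUltrahomogeneous X) [Finite ι] (p q : ι → X)
    (hpq : ∀ i j, dist (q i) (q j) = dist (p i) (p j)) (z : X) :
    ∃ w, ∀ i, dist w (p i) = dist z (q i) := by
  have hq : ∀ {i j}, p i = p j → q i = q j := fun h => dist_eq_zero.mp (by rw [hpq, h, dist_self])
  let φ : Set.range p → X := fun x => q x.2.choose
  have hφ : ∀ i, φ ⟨p i, i, rfl⟩ = q i := fun i => hq (Exists.choose_spec (p := (p · = p i)) _)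
  have hφ_iso : Isometry φ := Isometry.of_dist_eq <| by
    rintro ⟨_, i, rfl⟩ ⟨_, j, rfl⟩
    rw [hφ, hφ, hpq]
    rfl
  obtain ⟨ψ, hψ⟩ := hX _ (Set.finite_range p) φ hφ_iso
  refine ⟨ψ.symm z, fun i => ?_⟩
  rw [← ψ.dist_eq, ψ.apply_symm_apply, ← hφ, ← hψ]

variable [Fintype ι] {p : ι → X} {r : ι → ℝ}

theorem IsUltrahomogeneous.exists_dist_eq_of_isKatetov (hX : IsUltrahomogeneous X)
    (hr : IsKatetov p r) (f : katetovExtension p r → X) (hf : Isometry f) :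
    ∃ w, ∀ i, dist w (p i) = r i := by
  let K : ι → katetovExtension p r := fun i => ⟨kuratowski p (p i), .inr ⟨i, rfl⟩⟩
  obtain ⟨w, hw⟩ := hX.exists_dist_eq p (f ∘ K)
    (fun i j => by
      rw [Function.comp_apply, Function.comp_apply, hf.dist_eq]; exact dist_kuratowski p i j)
    (f ⟨r, Set.mem_insert _ _⟩)
  refine ⟨w, fun i => ?_⟩
  rw [hw, Function.comp_apply, hf.dist_eq]
  exact hr.dist_kuratowski_eq i

end Ultrahomogeneous

theorem IsUrysohnSphere.exists_dist_eq {S : Type} [MetricSpace S] (hS : IsUrysohnSphere S)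
    {ι : Type} [Fintype ι] {p : ι → S} {r : ι → ℝ} (hr : IsKatetov p r) (hr1 : ∀ i, r i ≤ 1) :
    ∃ w, ∀ i, dist w (p i) = r i := by
  obtain ⟨-, -, hU, hdiam, huniv⟩ := hS
  obtain ⟨f, hf⟩ := huniv (katetovExtension p r) inferInstance fun a b =>
    hr.dist_mem_of_mem_katetovExtension (D := Set.Iic 1) (Set.mem_Iic.mpr zero_le_one) hr1
      (fun _ _ => hdiam _ _) a.2 b.2
  exact hU.exists_dist_eq_of_isKatetov hr f hf

theorem IsUrysohnSphereM.exists_dist_eq {m : ℕ} {Sm : Type} [MetricSpace Sm]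
    (hSm : IsUrysohnSphereM m Sm) {ι : Type} [Fintype ι] {p : ι → Sm} {r : ι → ℝ}
    (hr : IsKatetov p r) (hrm : ∀ i, r i ∈ distSetM m) : ∃ w, ∀ i, dist w (p i) = r i := by
  obtain ⟨-, hU, hdist, huniv⟩ := hSm
  obtain ⟨f, hf⟩ := huniv (katetovExtension p r) inferInstance fun a b =>
    hr.dist_mem_of_mem_katetovExtension (D := distSetM m) ⟨0, Nat.zero_le _, by simp⟩ hrm
      (fun _ _ => hdist _ _) a.2 b.2
  exact hU.exists_dist_eq_of_isKatetov hr f hf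

section PartialIsometry

variable {α β : Type*} [PseudoMetricSpace α] [PseudoMetricSpace β]

def IsPartialIsometry (s : Set (α × β)) : Prop :=
  s.Pairwise fun a b => dist a.1 b.1 = dist a.2 b.2

theorem IsPartialIsometry.dist_eq {s : Set (α × β)} (hs : IsPartialIsometry s) {a b : α × β}
    (ha : a ∈ s) (hb : b ∈ s) : dist a.1 b.1 = dist a.2 b.2 := by
  rcases eq_or_ne a b with rfl | hab
  · rw [dist_self, dist_self]
  · exact hs ha hb hab

theorem IsPartialIsometry.insert {s : Set (α × β)} (hs : IsPartialIsometry s) {a : α × β}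
    (ha : ∀ b ∈ s, dist a.1 b.1 = dist a.2 b.2) : IsPartialIsometry (insert a s) :=
  Set.Pairwise.insert hs fun b hb _ => ⟨ha b hb, by rw [dist_comm, ha b hb, dist_comm]⟩

variable (α β) in
abbrev FinPartialIsometry := {s : Finset (α × β) // IsPartialIsometry (s : Set (α × β))}

theorem exists_isometry_of_cofinal {β : Type*} [MetricSpace β] [Countable α] {κ : Type*}
    [Countable κ] (P : κ → β → Prop)
    (hdom : ∀ (s : FinPartialIsometry α β) x, ∃ t ≥ s, ∃ y, (x, y) ∈ t.1)
    (hP : ∀ (s : FinPartialIsometry α β) k, ∃ t ≥ s, ∃ a ∈ t.1, P k a.2) :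
    ∃ φ : α → β, Isometry φ ∧ ∀ k, ∃ x, P k (φ x) := by
  have := Encodable.ofCountable α
  have := Encodable.ofCountable κ
  let 𝒟 : α ⊕ κ → Order.Cofinal (FinPartialIsometry α β) := Sum.elim
    (fun x => ⟨{t | ∃ y, (x, y) ∈ t.1}, fun s => (hdom s x).imp fun _ ht => ⟨ht.2, ht.1⟩⟩)
    (fun k => ⟨{t | ∃ a ∈ t.1, P k a.2}, fun s => (hP s k).imp fun _ ht => ⟨ht.2, ht.1⟩⟩)
  let I := Order.idealOfCofinals ⟨∅, by simp [IsPartialIsometry]⟩ 𝒟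
  have hI : ∀ t ∈ I, ∀ t' ∈ I, ∀ a ∈ t.1, ∀ b ∈ t'.1, dist a.1 b.1 = dist a.2 b.2 := by
    intro t ht t' ht' a ha b hb
    obtain ⟨u, -, htu, ht'u⟩ := I.directed _ ht _ ht'
    exact u.2.dist_eq (htu ha) (ht'u hb)
  have hφ : ∀ x, ∃ y, ∃ t ∈ I, (x, y) ∈ t.1 := fun x => by
    obtain ⟨t, ⟨y, hy⟩, ht⟩ := Order.cofinal_meets_idealOfCofinals _ 𝒟 (.inl x)
    exact ⟨y, t, ht, hy⟩
  choose φ t ht hφ using hφ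
  refine ⟨φ, Isometry.of_dist_eq fun x x' => (hI _ (ht x) _ (ht x') _ (hφ x) _ (hφ x')).symm,
    fun k => ?_⟩
  obtain ⟨t', ⟨a, ha, hPa⟩, ht'⟩ := Order.cofinal_meets_idealOfCofinals _ 𝒟 (.inr k)
  have : φ a.1 = a.2 := dist_eq_zero.mp <| by
    rw [← hI _ (ht a.1) _ ht' _ (hφ a.1) _ ha, dist_self]
  exact ⟨a.1, this ▸ hPa⟩

end PartialIsometry

section Extension

variable {S : Type} [MetricSpace S]

theorem IsUrysohnSphere.exists_extension_defined_at (hS : IsUrysohnSphere S) {α : Type}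
    [MetricSpace α] (hα : ∀ x y : α, dist x y ≤ 1) (s : FinPartialIsometry α S) (x : α) :
    ∃ t ≥ s, ∃ y, (x, y) ∈ t.1 := by
  classical
  obtain ⟨y, hy⟩ := hS.exists_dist_eq (p := fun a : s.1 => a.1.2)
    ((isKatetov_kuratowski (fun a : s.1 => a.1.1) x).congr fun a b => s.2.dist_eq a.2 b.2)
    fun _ => hα _ _
  refine ⟨⟨insert (x, y) s.1, ?_⟩, Finset.subset_insert _ _, y, Finset.mem_insert_self _ _⟩
  rw [Finset.coe_insert]
  exact s.2.insert fun b hb => (hy ⟨b, hb⟩).symm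

theorem IsUrysohnSphere.exists_extension_near (hS : IsUrysohnSphere S) {m : ℕ} (hm : 0 < m)
    {Sm : Type} [MetricSpace Sm] (hSm : IsUrysohnSphereM m Sm) (s : FinPartialIsometry Sm S)
    (z : S) : ∃ t ≥ s, ∃ a ∈ t.1, dist z a.2 ≤ 1 / (2 * m) := by
  classical
  have hm' : (0 : ℝ) < m := by exact_mod_cast hm
  let p : s.1 → Sm := fun a => a.1.1
  let q : s.1 → S := fun a => a.1.2
  have hpq : ∀ i j, dist (p i) (p j) = dist (q i) (q j) := fun i j => s.2.dist_eq i.2 j.2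
  have hgrid : ∀ i j, ∃ k : ℤ, dist (q i) (q j) = k / m := fun i j => by
    obtain ⟨k, -, hk⟩ := hSm.2.2.1 (p i) (p j)
    exact ⟨k, by rw [← hpq, hk, Int.cast_natCast]⟩
  let a := kuratowski q z
  let ρ := gridRound m a
  have hρm : ∀ i, ρ i ∈ distSetM m := fun i =>
    round_mul_div_mem_distSetM dist_nonneg (hS.2.2.2.1 _ _)
  obtain ⟨x, hx⟩ := hSm.exists_dist_eq
    (((isKatetov_kuratowski q z).gridRound hm' hgrid).congr fun i j => (hpq i j).symm) hρm
  have hc := dist_gridRound_le hm' a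
  obtain ⟨w, hw⟩ := hS.exists_dist_eq (isKatetov_option_gridRound hm' hgrid z) <| by
    have hm1 : (1 : ℝ) ≤ m := by exact_mod_cast hm
    rintro (_ | i)
    · exact hc.trans ((div_le_one (by positivity)).mpr (by linarith))
    · exact le_one_of_mem_distSetM hm (hρm i)
  refine ⟨⟨insert (x, w) s.1, ?_⟩, Finset.subset_insert _ _, (x, w),
    Finset.mem_insert_self _ _, ?_⟩
  · rw [Finset.coe_insert]
    exact s.2.insert fun b hb => (hx ⟨b, hb⟩).trans (hw (some ⟨b, hb⟩)).symm
  · rw [dist_comm]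
    exact (hw none).trans_le hc

end Extension

/-- There is an isometric copy of `S_m` inside `S` which is `1/m`-dense. -/
theorem stmt3 (m : ℕ) (hm : 0 < m)
    (S : Type) [MetricSpace S] (hS : IsUrysohnSphere S)
    (Sm : Type) [MetricSpace Sm] (hSm : IsUrysohnSphereM m Sm) :
    ∃ φ : Sm → S, Isometry φ ∧ ∀ s : S, ∃ x : Sm, dist s (φ x) ≤ 1/(m:ℝ) := by
  have := hS.2.1
  have := hSm.1
  obtain ⟨D, hDc, hD⟩ := TopologicalSpace.exists_countable_dense S
  have := hDc.to_subtype
  obtain ⟨φ, hφ, hφD⟩ := exists_isometry_of_cofinal (κ := D)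
    (fun z y => dist (z : S) y ≤ 1 / (2 * m))
    (hS.exists_extension_defined_at fun x y => le_one_of_mem_distSetM hm (hSm.2.2.1 x y))
    (fun s z => hS.exists_extension_near hm hSm s z)
  refine ⟨φ, hφ, fun s => ?_⟩
  obtain ⟨z, hzD, hsz⟩ := hD.exists_dist_lt s (by positivity : (0 : ℝ) < 1 / (2 * m))
  obtain ⟨x, hx⟩ := hφD ⟨z, hzD⟩
  refine ⟨x, ?_⟩
  calc dist s (φ x) ≤ dist s z + dist z (φ x) := dist_triangle _ _ _
    _ ≤ 1 / (2 * m) + 1 / (2 * m) := add_le_add hsz.le hx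
    _ = 1 / m := by field_simp; norm_num
end

section
/- Let m be a positive integer, let M be a metric space, let X ⊆ M be a finite nonempty subset all of whose pairwise distances are integer multiples of 1/m, and let y ∈ M with y ∉ X. Define f on X ∪ {y} by f(x) = ⌈d(x,y)⌉_m for x ∈ X and f(y) = max{ ⌈d(x,y)⌉_m − d(x,y) : x ∈ X }. Then f satisfies the Katětov inequalities on X ∪ {y}: for all a, b ∈ X ∪ {y}, |f(a) − f(b)| ≤ d(a,b) ≤ f(a) + f(b). -/
/-!
Since `f y` is the maximum of `f x - d(x,y)` over `X`, the Katětov inequalities on `X ∪ {y}`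
reduce to two facts about `f` on `X`: `d(x,y) ≤ f x`, because rounding up increases a number, and
`f a - f b ≤ d(a,b)`: as `d(a,b)` is a multiple of `1/m`, rounding both sides of
`d(a,y) ≤ d(b,y) + d(a,b)` up to a multiple of `1/m` preserves the inequality.
-/
open Metric

/-- The paper's `⌈α⌉_m`. -/
noncomputable def ceilM (m : ℕ) (α : ℝ) : ℝ := ⌈(m : ℝ) * α⌉ / m

theorem le_ceilM {m : ℕ} (hm : 0 < m) (α : ℝ) : α ≤ ceilM m α := by
  rw [ceilM, le_div_iff₀ (by positivity), mul_comm]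
  exact Int.le_ceil _

theorem ceilM_le_ceilM_add {m : ℕ} (hm : 0 < m) {α β : ℝ} (k : ℤ) (h : α ≤ β + k / m) :
    ceilM m α ≤ ceilM m β + k / m := by
  have hm' : (0 : ℝ) < m := by positivity
  have hceil : ⌈(m : ℝ) * α⌉ ≤ ⌈(m : ℝ) * β⌉ + k := by
    rw [Int.ceil_le, Int.cast_add]
    calc (m : ℝ) * α ≤ m * β + k := by
          rw [← mul_div_cancel₀ (k : ℝ) hm'.ne', ← mul_add]
          gcongr
      _ ≤ ⌈(m : ℝ) * β⌉ + k := by gcongr; exact Int.le_ceil _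
  rw [ceilM, ceilM, ← add_div]
  gcongr
  exact_mod_cast hceil

section Katetov

variable {M : Type*} [MetricSpace M]

theorem katetov_union_singleton {X : Set M} {y : M} {f : M → ℝ}
    (hlip : ∀ a ∈ X, ∀ b ∈ X, f a - f b ≤ dist a b) (hge : ∀ x ∈ X, dist x y ≤ f x)
    (hy₁ : ∃ x ∈ X, f y = f x - dist x y) (hy₂ : ∀ x ∈ X, f x - dist x y ≤ f y) :
    ∀ a ∈ X ∪ {y}, ∀ b ∈ X ∪ {y}, |f a - f b| ≤ dist a b ∧ dist a b ≤ f a + f b := by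
  obtain ⟨x₀, hx₀, hfy⟩ := hy₁
  have hsub : ∀ a ∈ X ∪ {y}, ∀ b ∈ X ∪ {y}, f a - f b ≤ dist a b := by
    rintro a (ha | rfl) b (hb | rfl)
    · exact hlip a ha b hb
    · linarith [hy₂ a ha]
    · linarith [hlip x₀ hx₀ b hb, dist_triangle x₀ a b]
    · simp
  have hadd : ∀ a ∈ X ∪ {y}, ∀ b ∈ X ∪ {y}, dist a b ≤ f a + f b := by
    have hfy_nonneg : 0 ≤ f y := by linarith [hge x₀ hx₀]
    rintro a (ha | rfl) b (hb | rfl)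
    · linarith [dist_triangle_right a b y, hge a ha, hge b hb]
    · linarith [hge a ha]
    · linarith [dist_comm a b, hge b hb]
    · simpa using hfy_nonneg
  exact fun a ha b hb =>
    ⟨abs_sub_le_iff.2 ⟨hsub a ha b hb, dist_comm a b ▸ hsub b hb a ha⟩, hadd a ha b hb⟩

theorem ceilM_dist_sub_ceilM_dist_le {m : ℕ} (hm : 0 < m) {a b : M} (y : M) {k : ℤ}
    (hk : dist a b = k / m) : ceilM m (dist a y) - ceilM m (dist b y) ≤ dist a b := by
  rw [sub_le_iff_le_add', hk]
  exact ceilM_le_ceilM_add hm k (by linarith [dist_triangle a b y])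

end Katetov

theorem stmt4_general (m : ℕ) (hm : 0 < m) (M : Type*) [MetricSpace M]
    (X : Set M)
    (hdist : ∀ x ∈ X, ∀ x' ∈ X, ∃ k : ℤ, dist x x' = (k : ℝ) / m)
    (y : M)
    (f : M → ℝ)
    (hfX : ∀ x ∈ X, f x = (⌈(m : ℝ) * dist x y⌉ : ℝ) / m)
    (hfy₁ : ∃ x ∈ X, f y = (⌈(m : ℝ) * dist x y⌉ : ℝ) / m - dist x y)
    (hfy₂ : ∀ x ∈ X, (⌈(m : ℝ) * dist x y⌉ : ℝ) / m - dist x y ≤ f y) :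
    ∀ a ∈ X ∪ {y}, ∀ b ∈ X ∪ {y},
      |f a - f b| ≤ dist a b ∧ dist a b ≤ f a + f b := by
  have hfX' : ∀ x ∈ X, f x = ceilM m (dist x y) := hfX
  refine katetov_union_singleton (fun a ha b hb => ?_) (fun x hx => ?_) ?_ (fun x hx => ?_)
  · obtain ⟨k, hk⟩ := hdist a ha b hb
    rw [hfX' a ha, hfX' b hb]
    exact ceilM_dist_sub_ceilM_dist_le hm y hk
  · exact hfX' x hx ▸ le_ceilM hm _
  · obtain ⟨x, hx, hfy⟩ := hfy₁
    exact ⟨x, hx, by rw [hfy, hfX x hx]⟩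
  · rw [hfX x hx]
    exact hfy₂ x hx

/-- The Katětov map claim: if `X` has pairwise distances which are integer
multiples of `1/m` and `y ∉ X`, then the map `f` defined by
`f x = ⌈d(x,y)⌉_m` on `X` and `f y = max {⌈d(x,y)⌉_m - d(x,y) : x ∈ X}`
satisfies the Katětov inequalities on `X ∪ {y}`. -/
theorem stmt4 (m : ℕ) (hm : 0 < m) (M : Type*) [MetricSpace M]
    (X : Set M) (hXfin : X.Finite) (hXne : X.Nonempty)
    (hdist : ∀ x ∈ X, ∀ x' ∈ X, ∃ k : ℤ, dist x x' = (k : ℝ) / m)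
    (y : M) (hy : y ∉ X)
    (f : M → ℝ)
    (hfX : ∀ x ∈ X, f x = (⌈(m : ℝ) * dist x y⌉ : ℝ) / m)
    (hfy₁ : ∃ x ∈ X, f y = (⌈(m : ℝ) * dist x y⌉ : ℝ) / m - dist x y)
    (hfy₂ : ∀ x ∈ X, (⌈(m : ℝ) * dist x y⌉ : ℝ) / m - dist x y ≤ f y) :
    ∀ a ∈ X ∪ {y}, ∀ b ∈ X ∪ {y},
      |f a - f b| ≤ dist a b ∧ dist a b ≤ f a + f b :=
  stmt4_general m hm M X hdist y f hfX hfy₁ hfy₂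
end

section
/- Let S be a Urysohn sphere and let A and B be two subsets of S, each isometric to the rational Urysohn sphere S_Q, with A dense in S. Then for every ε > 0, the set A ∩ (B)_ε contains a subset isometric to S_Q. -/
open Metric

/-! The copy of `S_ℚ` inside `A` is built one point at a time along an enumeration of `S_ℚ`,
keeping the image of the `n`-th point within a tolerance `rₙ < ε` of its copy in `B`, with
`rₙ` increasing. To place a new point `p`, the Urysohn sphere first realizes a point `s` with the
right distances to the points already placed in `A` and within `rₙ` of the copy of `p` in `B`:
this is a Katětov function on finitely many points of `S`. By density, some `a ∈ A` lies within a
small rational `δ` of `s`, and the rational Urysohn sphere realizes a point at distance `δ` from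
`a` with the right (rational) distances to the points already placed; it moves at most `2δ`
away from `s`. -/

open Filter Topology

/-- `f i` prescribes the distance from a new point to `x i`; the family may repeat points. -/
def IsKatetovOn {ι T : Type*} [PseudoMetricSpace T] (x : ι → T) (f : ι → ℝ) : Prop :=
  ∀ i j, |f i - f j| ≤ dist (x i) (x j) ∧ dist (x i) (x j) ≤ f i + f j

theorem isKatetovOn_dist_of_dist_eq {ι T Y : Type*} [PseudoMetricSpace T] [PseudoMetricSpace Y]
    {x : ι → T} {y : ι → Y} (hxy : ∀ i j, dist (x i) (x j) = dist (y i) (y j)) (z : Y) :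
    IsKatetovOn x fun i => dist (y i) z := fun i j => by
  rw [hxy]
  exact ⟨abs_dist_sub_le _ _ _, dist_triangle_right _ _ _⟩

namespace IsKatetovOn

variable {ι T : Type*} [PseudoMetricSpace T] {x : ι → T} {f : ι → ℝ}

theorem option (hf : IsKatetovOn x f) {x₀ : T} {f₀ : ℝ} (hf₀ : 0 ≤ f₀)
    (h₀ : ∀ i, |f₀ - f i| ≤ dist x₀ (x i) ∧ dist x₀ (x i) ≤ f₀ + f i) :
    IsKatetovOn (fun o : Option ι => o.elim x₀ x) (fun o => o.elim f₀ f) := by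
  rintro (_ | i) (_ | j)
  · simpa using hf₀
  · exact h₀ j
  · simpa [abs_sub_comm, dist_comm, add_comm] using h₀ i
  · exact hf i j

@[reducible]
def optionPseudoMetricSpace (hf : IsKatetovOn x f) : PseudoMetricSpace (Option ι) where
  dist
    | some i, some j => dist (x i) (x j)
    | some i, none => f i
    | none, some j => f j
    | none, none => 0
  dist_self := by rintro (_ | i) <;> simp
  dist_comm := by rintro (_ | i) (_ | j) <;> simp [dist_comm]
  dist_triangle := by
    rintro (_ | i) (_ | j) (_ | k) <;> simp only
    · simp
    · have := (hf k k).2; simp at this; linarith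
    · have := (hf j j).2; simp at this; linarith
    · linarith [abs_le.1 (hf j k).1]
    · simp
    · exact (hf i k).2
    · linarith [abs_le.1 (hf i j).1, dist_comm (x i) (x j)]
    · exact dist_triangle _ _ _

end IsKatetovOn

def RealizesKatetov (T : Type) [MetricSpace T] (D : Set ℝ) : Prop :=
  ∀ {ι : Type} [Finite ι] (x : ι → T) (f : ι → ℝ), IsKatetovOn x f → (∀ i, f i ∈ D) →
    ∃ s, ∀ i, dist s (x i) = f i

namespace IsUltrahomogeneous

variable {T : Type} [MetricSpace T]

theorem exists_dist_eq_s5 (hT : IsUltrahomogeneous T) {ι : Type} [Finite ι] {x y : ι → T}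
    (hxy : ∀ i j, dist (x i) (x j) = dist (y i) (y j)) (y₀ : T) :
    ∃ s, ∀ i, dist s (x i) = dist y₀ (y i) := by
  choose idx hidx using fun z : Set.range y => z.2
  have hφ : Isometry fun z : Set.range y => x (idx z) :=
    Isometry.of_dist_eq fun z w => by rw [hxy, hidx, hidx, Subtype.dist_eq]
  obtain ⟨ψ, hψ⟩ := hT _ (Set.finite_range y) _ hφ
  refine ⟨ψ y₀, fun i => ?_⟩
  have hi : x (idx ⟨y i, Set.mem_range_self i⟩) = x i := by
    rw [← dist_eq_zero, hxy, hidx, dist_self]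
  rw [← hi, ← hψ, ψ.dist_eq]

theorem realizesKatetov (hT : IsUltrahomogeneous T) {D : Set ℝ} (hD₀ : 0 ∈ D)
    (hTD : ∀ a b : T, dist a b ∈ D)
    (huniv : ∀ (Y : Type) [MetricSpace Y] [Finite Y], (∀ a b : Y, dist a b ∈ D) →
      ∃ j : Y → T, Isometry j) :
    RealizesKatetov T D := by
  intro ι _ x f hf hfD
  let := hf.optionPseudoMetricSpace
  -- the separation quotient identifies repeated points of the family
  have : Finite (SeparationQuotient (Option ι)) :=
    Finite.of_surjective _ SeparationQuotient.surjective_mk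
  obtain ⟨j, hj⟩ := huniv (SeparationQuotient (Option ι)) <|
    SeparationQuotient.surjective_mk.forall₂.2 <| by
      rintro (_ | i) (_ | k)
      exacts [hD₀, hfD k, hfD i, hTD _ _]
  obtain ⟨s, hs⟩ := hT.exists_dist_eq_s5 (x := x) (y := fun i => j (.mk (some i)))
    (fun i k => (hj.dist_eq (.mk (some i)) (.mk (some k))).symm) (j (.mk none))
  exact ⟨s, fun i => (hs i).trans (hj.dist_eq _ _)⟩

end IsUltrahomogeneous

def ratUnitInterval : Set ℝ := {d | ∃ q : ℚ, 0 ≤ q ∧ q ≤ 1 ∧ d = q}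

theorem IsUrysohnSphere.realizesKatetov {S : Type} [MetricSpace S] (hS : IsUrysohnSphere S) :
    RealizesKatetov S (Set.Icc 0 1) :=
  hS.2.2.1.realizesKatetov (D := Set.Icc 0 1) ⟨le_rfl, zero_le_one⟩
    (fun a b => ⟨dist_nonneg, hS.2.2.2.1 a b⟩)
    fun Y _ _ hY => hS.2.2.2.2 Y inferInstance fun a b => (hY a b).2

theorem IsRationalUrysohnSphere.realizesKatetov {SQ : Type} [MetricSpace SQ]
    (hSQ : IsRationalUrysohnSphere SQ) : RealizesKatetov SQ ratUnitInterval :=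
  hSQ.2.1.realizesKatetov (D := ratUnitInterval) ⟨0, le_rfl, zero_le_one, by simp⟩ hSQ.2.2.1
    fun Y _ _ hY => hSQ.2.2.2 Y inferInstance hY

theorem exists_nonneg_le_forall_le {ι : Type*} [Finite ι] {a b : ι → ℝ} {c : ℝ}
    (hab : ∀ i j, a i ≤ b j) (hac : ∀ i, a i ≤ c) (hb : ∀ j, 0 ≤ b j) (hc : 0 ≤ c) :
    ∃ t, 0 ≤ t ∧ t ≤ c ∧ (∀ i, a i ≤ t) ∧ ∀ j, t ≤ b j := by
  have hbdd : BddBelow (Set.range b) := (Set.finite_range b).bddBelow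
  refine ⟨min c (⨅ j, b j), le_min hc (Real.iInf_nonneg hb), min_le_left _ _,
    fun i => le_min (hac i) ?_, fun j => (min_le_right _ _).trans (ciInf_le hbdd j)⟩
  have : Nonempty ι := ⟨i⟩
  exact le_ciInf (hab i)

theorem exists_rat_pos_le {ι : Type*} [Finite ι] {b : ι → ℝ} (hb : ∀ i, 0 < b i) {c : ℝ}
    (hc : 0 < c) : ∃ q : ℚ, 0 < q ∧ (q : ℝ) ≤ c ∧ ∀ i, (q : ℝ) ≤ b i := by
  have hsmall : ∀ᶠ y in 𝓝 (0 : ℝ), y ≤ c ∧ ∀ i, y ≤ b i :=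
    (eventually_le_nhds hc).and (eventually_all.2 fun i => eventually_le_nhds (hb i))
  obtain ⟨n, hn⟩ := (tendsto_one_div_add_atTop_nhds_zero_nat.eventually hsmall).exists
  have hcast : ((1 / ((n : ℚ) + 1) : ℚ) : ℝ) = 1 / ((n : ℝ) + 1) := by push_cast; rfl
  exact ⟨1 / (n + 1), by positivity, hcast ▸ hn.1, fun i => hcast ▸ hn.2 i⟩

theorem exists_eqOn_of_eqOn_succ {α β : Type*} {P : ℕ → Set α} (hP : Monotone P)
    (hcover : ∀ x, ∃ n, x ∈ P n) {g : ℕ → α → β} (hg : ∀ n, Set.EqOn (g (n + 1)) (g n) (P n)) :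
    ∃ G : α → β, ∀ n, Set.EqOn G (g n) (P n) := by
  have hstable : ∀ m n, m ≤ n → Set.EqOn (g n) (g m) (P m) := by
    intro m n hmn
    induction n, hmn using Nat.le_induction with
    | base => exact Set.eqOn_refl _ _
    | succ n hmn ih => exact fun x hx => (hg n (hP hmn hx)).trans (ih hx)
  choose N hN using hcover
  refine ⟨fun x => g (N x) x, fun n x hx => ?_⟩
  calc g (N x) x = g (max (N x) n) x := (hstable _ _ (le_max_left _ _) (hN x)).symm
    _ = g n x := hstable _ _ (le_max_right _ _) hx


section ApproxLift

variable {S SQ X : Type} [MetricSpace S] [MetricSpace SQ] [MetricSpace X]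

def IsApproxLiftOn (eA : SQ → S) (eB : X → S) (r : ℝ) (P : Finset X) (g : X → SQ) : Prop :=
  (∀ x ∈ P, ∀ y ∈ P, dist (g x) (g y) = dist x y) ∧ ∀ x ∈ P, dist (eA (g x)) (eB x) ≤ r

namespace IsApproxLiftOn

variable {eA : SQ → S} {eB : X → S} {r : ℝ} {P : Finset X} {g : X → SQ}

theorem mono (hg : IsApproxLiftOn eA eB r P g) {r' : ℝ} (hr : r ≤ r') :
    IsApproxLiftOn eA eB r' P g :=
  ⟨hg.1, fun x hx => (hg.2 x hx).trans hr⟩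

theorem exists_ambient_point (hS : IsUrysohnSphere S) (hA : Isometry eA) (hB : Isometry eB)
    (hr : 0 ≤ r) (hg : IsApproxLiftOn eA eB r P g) (p : X) :
    ∃ s : S, (∀ x ∈ P, dist s (eA (g x)) = dist x p) ∧ dist s (eB p) ≤ r := by
  have hdiam : ∀ a b : S, dist a b ≤ 1 := hS.2.2.2.1
  set d : P → ℝ := fun x => dist (x : X) p
  set D : P → ℝ := fun x => dist (eA (g x)) (eB p)
  have hgP : ∀ x y : P, dist (eA (g x)) (eA (g y)) = dist (x : X) y := fun x y => by
    rw [hA.dist_eq, hg.1 x x.2 y y.2]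
  have hdD : ∀ x y : P, |d x - D x| ≤ d y + D y := fun x y => by
    have := dist_triangle (x : X) y p
    have := dist_triangle_right (eA (g x)) (eA (g y)) (eB p)
    have := dist_triangle (eA (g x)) (eA (g y)) (eB p)
    have := dist_triangle_right (x : X) y p
    rw [hgP] at *
    rw [abs_le]; constructor <;> linarith
  have hdr : ∀ x : P, |d x - D x| ≤ min r 1 := fun x => by
    have h := abs_dist_sub_le (eB x) (eA (g x)) (eB p)
    rw [hB.dist_eq] at h
    exact le_min (h.trans ((dist_comm _ _).trans_le (hg.2 x x.2))) (h.trans (hdiam _ _))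
  -- `t` will be `dist s (eB p)`; the triangle inequalities with `eA (g x)` confine it to
  -- `[|d x - D x|, d x + D x]` for every `x`
  obtain ⟨t, ht0, htr, hdt, htD⟩ := exists_nonneg_le_forall_le hdD hdr
    (fun x => add_nonneg dist_nonneg dist_nonneg) (le_min hr zero_le_one)
  have hK : IsKatetovOn (fun o : Option P => o.elim (eB p) fun x => eA (g x))
      (fun o => o.elim t d) :=
    (isKatetovOn_dist_of_dist_eq hgP p).option ht0 fun x => by
      have := abs_le.1 (hdt x)
      have := htD x
      rw [dist_comm (eB p), abs_le]
      exact ⟨⟨by linarith, by linarith⟩, by linarith⟩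
  obtain ⟨s, hs⟩ := hS.realizesKatetov _ _ hK <| by
    rintro (_ | x)
    · exact ⟨ht0, htr.trans (min_le_right _ _)⟩
    · exact ⟨dist_nonneg, (hB.dist_eq x p).symm.trans_le (hdiam _ _)⟩
  exact ⟨s, fun x hx => hs (some ⟨x, hx⟩), (hs none).trans_le (htr.trans (min_le_left _ _))⟩

theorem exists_lift_point (hS : IsUrysohnSphere S) (hSQ : IsRationalUrysohnSphere SQ)
    (hA : Isometry eA) (hdense : DenseRange eA) (hB : Isometry eB)
    (hX : ∀ x y : X, dist x y ∈ ratUnitInterval) (hr : 0 ≤ r) (hg : IsApproxLiftOn eA eB r P g)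
    {p : X} (hp : p ∉ P) {γ : ℝ} (hγ : 0 < γ) :
    ∃ w : SQ, (∀ x ∈ P, dist w (g x) = dist x p) ∧ dist (eA w) (eB p) ≤ r + γ := by
  obtain ⟨s, hsP, hsp⟩ := hg.exists_ambient_point hS hA hB hr p
  obtain ⟨δ, hδ0, hδγ, hδP⟩ := exists_rat_pos_le (b := fun x : P => dist (x : X) p)
    (fun x => dist_pos.2 (ne_of_mem_of_not_mem x.2 hp)) (lt_min one_pos (half_pos hγ))
  obtain ⟨a, ha⟩ := hdense.exists_dist_lt s (Rat.cast_pos.2 hδ0)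
  have hK : IsKatetovOn (fun o : Option P => o.elim a fun x => g x)
      (fun o => o.elim (δ : ℝ) fun x => dist (x : X) p) :=
    (isKatetovOn_dist_of_dist_eq (fun x y : P => hg.1 x x.2 y y.2) p).option
      (Rat.cast_nonneg.2 hδ0.le) fun x => by
        have h := abs_dist_sub_le (eA a) s (eA (g x))
        rw [hsP x x.2, hA.dist_eq, dist_comm (eA a)] at h
        have := hδP x
        have := abs_le.1 h
        rw [abs_le]
        exact ⟨⟨by linarith, by linarith⟩, by linarith⟩
  obtain ⟨w, hw⟩ := hSQ.realizesKatetov _ _ hK <| by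
    rintro (_ | x)
    · exact ⟨δ, hδ0.le, by exact_mod_cast hδγ.trans (min_le_left _ _), rfl⟩
    · exact hX x p
  refine ⟨w, fun x hx => hw (some ⟨x, hx⟩), ?_⟩
  have hwa : dist (eA w) (eA a) = δ := (hA.dist_eq w a).trans (hw none)
  calc dist (eA w) (eB p) ≤ dist (eA w) (eA a) + dist (eA a) s + dist s (eB p) :=
        dist_triangle4 _ _ _ _
    _ ≤ δ + δ + r := by rw [hwa, dist_comm]; gcongr
    _ ≤ r + γ := by linarith [hδγ.trans (min_le_right _ _)]

theorem exists_insert [DecidableEq X] (hS : IsUrysohnSphere S) (hSQ : IsRationalUrysohnSphere SQ)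
    (hA : Isometry eA) (hdense : DenseRange eA) (hB : Isometry eB)
    (hX : ∀ x y : X, dist x y ∈ ratUnitInterval) (hr : 0 ≤ r) (hg : IsApproxLiftOn eA eB r P g)
    (p : X) {γ : ℝ} (hγ : 0 < γ) :
    ∃ g', IsApproxLiftOn eA eB (r + γ) (insert p P) g' ∧ Set.EqOn g' g P := by
  by_cases hp : p ∈ P
  · refine ⟨g, ?_, Set.eqOn_refl _ _⟩
    rw [Finset.insert_eq_of_mem hp]
    exact hg.mono (le_add_of_nonneg_right hγ.le)
  obtain ⟨w, hwP, hwp⟩ := hg.exists_lift_point hS hSQ hA hdense hB hX hr hp hγ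
  have hupd : Set.EqOn (Function.update g p w) g P := fun x hx =>
    Function.update_of_ne (ne_of_mem_of_not_mem hx hp) _ _
  refine ⟨Function.update g p w, ⟨?_, ?_⟩, hupd⟩
  · simp only [Finset.forall_mem_insert, Function.update_self, dist_self, true_and]
    refine ⟨fun y hy => by rw [hupd hy, hwP y hy, dist_comm], fun x hx => ⟨?_, fun y hy => ?_⟩⟩
    · rw [hupd hx, dist_comm, hwP x hx]
    · rw [hupd hx, hupd hy, hg.1 x hx y hy]
  · simp only [Finset.forall_mem_insert, Function.update_self]
    exact ⟨hwp, fun x hx => by rw [hupd hx]; linarith [hg.2 x hx]⟩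

end IsApproxLiftOn

variable {eA : SQ → S} {eB : X → S}
theorem exists_seq_isApproxLiftOn [DecidableEq X] [Nonempty SQ] (hS : IsUrysohnSphere S)
    (hSQ : IsRationalUrysohnSphere SQ) (hA : Isometry eA) (hdense : DenseRange eA)
    (hB : Isometry eB) (hX : ∀ x y : X, dist x y ∈ ratUnitInterval) (u : ℕ → X) {ε : ℝ}
    (hε : 0 < ε) :
    ∃ g : ℕ → X → SQ, ∀ n, IsApproxLiftOn eA eB ε ((Finset.range n).image u) (g n) ∧
      Set.EqOn (g (n + 1)) (g n) ((Finset.range n).image u) := by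
  -- the radii increase strictly from `0` towards `ε`, leaving room for every extension step
  let r : ℕ → ℝ := fun n => ε - ε / (n + 1)
  have hr0 : ∀ n, 0 ≤ r n := fun n => sub_nonneg.2 (div_le_self hε.le (by simp))
  have hrε : ∀ n, r n ≤ ε := fun n => sub_le_self _ (by positivity)
  have hr_lt : ∀ n, r n < r (n + 1) := fun n => by
    simp only [r]; push_cast
    gcongr; linarith
  have step : ∀ n g, IsApproxLiftOn eA eB (r n) ((Finset.range n).image u) g →
      ∃ g', IsApproxLiftOn eA eB (r (n + 1)) ((Finset.range (n + 1)).image u) g' ∧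
        Set.EqOn g' g ((Finset.range n).image u) := by
    intro n g hg
    rw [Finset.range_add_one, Finset.image_insert, ← add_sub_cancel (r n) (r (n + 1))]
    exact hg.exists_insert hS hSQ hA hdense hB hX (hr0 n) (u n) (sub_pos.2 (hr_lt n))
  choose! next hnext using step
  let g : ℕ → X → SQ := fun n => Nat.rec (fun _ => Classical.arbitrary SQ) next n
  have hg : ∀ n, IsApproxLiftOn eA eB (r n) ((Finset.range n).image u) (g n) := by
    intro n
    induction n with
    | zero => simp [IsApproxLiftOn]
    | succ n ih => exact (hnext n _ ih).1
  exact ⟨g, fun n => ⟨(hg n).mono (hrε n), (hnext n _ (hg n)).2⟩⟩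

theorem exists_isometry_dist_le [Countable X] (hS : IsUrysohnSphere S)
    (hSQ : IsRationalUrysohnSphere SQ) (hA : Isometry eA) (hdense : DenseRange eA)
    (hB : Isometry eB) (hX : ∀ x y : X, dist x y ∈ ratUnitInterval) {ε : ℝ} (hε : 0 < ε) :
    ∃ g : X → SQ, Isometry g ∧ ∀ x, dist (eA (g x)) (eB x) ≤ ε := by
  classical
  rcases isEmpty_or_nonempty X with hX₀ | hX₀
  · exact ⟨isEmptyElim, isometry_subsingleton, isEmptyElim⟩
  obtain ⟨u, hu⟩ := exists_surjective_nat X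
  have : Nonempty SQ := hdense.nonempty_iff.2 ⟨eB (u 0)⟩
  obtain ⟨g, hg⟩ := exists_seq_isApproxLiftOn hS hSQ hA hdense hB hX u hε
  set P : ℕ → Finset X := fun n => (Finset.range n).image u
  have hmem : ∀ k, u k ∈ P (k + 1) := fun k =>
    Finset.mem_image_of_mem u (Finset.self_mem_range_succ k)
  have hP : Monotone P := fun m n h => Finset.image_subset_image (Finset.range_mono h)
  obtain ⟨G, hG⟩ := exists_eqOn_of_eqOn_succ (P := fun n => (P n : Set X)) (g := g)
    (fun m n h => Finset.coe_subset.2 (hP h))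
    (fun x => by obtain ⟨k, rfl⟩ := hu x; exact ⟨k + 1, hmem k⟩) (fun n => (hg n).2)
  refine ⟨G, Isometry.of_dist_eq fun x y => ?_, fun x => ?_⟩
  · obtain ⟨k, rfl⟩ := hu x
    obtain ⟨l, rfl⟩ := hu y
    have hk : u k ∈ P (max k l + 1) := hP (by omega) (hmem k)
    have hl : u l ∈ P (max k l + 1) := hP (by omega) (hmem l)
    rw [hG _ hk, hG _ hl, (hg _).1.1 _ hk _ hl]
  · obtain ⟨k, rfl⟩ := hu x
    rw [hG _ (hmem k)]
    exact (hg _).1.2 _ (hmem k)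

end ApproxLift

/-- If `A, B ⊆ S` are copies of `S_ℚ` with `A` dense in `S`, then for every
`ε > 0`, `A ∩ (B)_ε` contains a copy of `S_ℚ`. -/
theorem stmt5 (S : Type) [MetricSpace S] (hS : IsUrysohnSphere S)
    (SQ : Type) [MetricSpace SQ] (hSQ : IsRationalUrysohnSphere SQ)
    (A B : Set S)
    (hA : ∃ e : SQ → S, Isometry e ∧ Set.range e = A)
    (hB : ∃ e : SQ → S, Isometry e ∧ Set.range e = B)
    (hAdense : Dense A) :
    ∀ ε : ℝ, 0 < ε →
      ∃ C ⊆ A ∩ {x : S | ∃ b ∈ B, dist x b ≤ ε},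
        ∃ e : SQ → S, Isometry e ∧ Set.range e = C := by
  obtain ⟨eA, hisoA, rfl⟩ := hA
  obtain ⟨eB, hisoB, rfl⟩ := hB
  intro ε hε
  have : Countable SQ := hSQ.1
  obtain ⟨g, hg, hclose⟩ :=
    exists_isometry_dist_le hS hSQ hisoA hAdense hisoB hSQ.2.2.1 hε
  refine ⟨Set.range (eA ∘ g), ?_, eA ∘ g, hisoA.comp hg, rfl⟩
  rintro _ ⟨x, rfl⟩
  exact ⟨Set.mem_range_self _, eB x, Set.mem_range_self x, hclose x⟩
end

section
/- Let ε > 0 and suppose the rational Urysohn sphere S_Q is ε-indivisible. Then for every positive integer m with m ≤ 1/ε, every countable ultrahomogeneous metric space S_m with all distances in [0,1]_m into which every countable metric space with distances in [0,1]_m embeds isometrically is (1/m)-indivisible. -/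
open Metric

/-!
`S_m` embeds into `S_ℚ` by some `f`, since its distances are rational. Rounding every distance of
`S_ℚ` up to the grid `[0,1]_m` gives a countable metric space with distances in `[0,1]_m`, so
`S_ℚ` maps into `S_m` by some `g` realising the rounded distances. Colour `S_ℚ` through `g`; if `e`
is an isometric copy of `S_ℚ` lying `ε`-close to one colour class, then `g ∘ e ∘ f` is an isometric
copy of `S_m` (rounding fixes distances already on the grid) lying `1/m`-close to that class,
since a distance `≤ ε ≤ 1/m` is rounded to at most `1/m`.
-/

noncomputable def ceilDist (m : ℕ) {X : Type*} [PseudoMetricSpace X] (x y : X) : ℝ :=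
  (⌈(m : ℝ) * dist x y⌉₊ : ℝ) / m

section ceilDist
variable {m : ℕ} {X : Type*}

section Pseudo
variable [PseudoMetricSpace X]

theorem ceilDist_self (x : X) : ceilDist m x x = 0 := by simp [ceilDist]

theorem ceilDist_comm (x y : X) : ceilDist m x y = ceilDist m y x := by
  rw [ceilDist, ceilDist, dist_comm]

theorem ceilDist_triangle (x y z : X) : ceilDist m x z ≤ ceilDist m x y + ceilDist m y z := by
  rw [ceilDist, ceilDist, ceilDist, ← add_div]
  gcongr
  have hceil : (m : ℝ) * dist x z ≤ ⌈(m : ℝ) * dist x y⌉₊ + ⌈(m : ℝ) * dist y z⌉₊ :=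
    calc (m : ℝ) * dist x z ≤ (m : ℝ) * dist x y + (m : ℝ) * dist y z := by
          rw [← mul_add]; gcongr; exact dist_triangle _ _ _
      _ ≤ _ := add_le_add (Nat.le_ceil _) (Nat.le_ceil _)
  exact_mod_cast Nat.ceil_le.mpr (by exact_mod_cast hceil)

theorem ceilDist_eq_dist_of_mem_distSetM {x y : X} (h : dist x y ∈ distSetM m) :
    ceilDist m x y = dist x y := by
  obtain ⟨k, -, hk⟩ := h
  rcases eq_or_ne m 0 with rfl | hm
  · simp [ceilDist, hk]
  · rw [ceilDist, hk, mul_div_cancel₀ _ (Nat.cast_ne_zero.mpr hm), Nat.ceil_natCast]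

theorem ceilDist_mem_distSetM {x y : X} (h : dist x y ≤ 1) : ceilDist m x y ∈ distSetM m :=
  ⟨_, Nat.ceil_le.mpr (by simpa using mul_le_mul_of_nonneg_left h m.cast_nonneg), rfl⟩

theorem ceilDist_le_one_div {x y : X} (h : dist x y ≤ 1 / m) : ceilDist m x y ≤ 1 / m := by
  have hceil : ⌈(m : ℝ) * dist x y⌉₊ ≤ 1 := Nat.ceil_le.mpr <| by
    calc (m : ℝ) * dist x y ≤ m * (1 / m) := by gcongr
      _ ≤ ((1 : ℕ) : ℝ) := by rw [Nat.cast_one, mul_one_div]; exact div_self_le_one _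
  rw [ceilDist]
  gcongr
  exact_mod_cast hceil

end Pseudo

theorem eq_of_ceilDist_eq_zero [MetricSpace X] (hm : m ≠ 0) {x y : X} (h : ceilDist m x y = 0) :
    x = y := by
  rw [ceilDist, div_eq_zero_iff, Nat.cast_eq_zero, Nat.cast_eq_zero, Nat.ceil_eq_zero] at h
  have hm' : (0 : ℝ) < m := by positivity
  refine dist_le_zero.mp (nonpos_of_mul_nonpos_right ?_ hm')
  exact h.resolve_right hm

end ceilDist

theorem exists_rat_of_mem_distSetM {m : ℕ} {d : ℝ} (h : d ∈ distSetM m) :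
    ∃ q : ℚ, 0 ≤ q ∧ q ≤ 1 ∧ d = q := by
  obtain ⟨k, hk, rfl⟩ := h
  exact ⟨k / m, by positivity, div_le_one_of_le₀ (by exact_mod_cast hk) m.cast_nonneg,
    by push_cast; rfl⟩

structure CeilMetric (m : ℕ) (X : Type*) where
  val : X

namespace CeilMetric
variable {m : ℕ} {X : Type*} [MetricSpace X]

noncomputable instance [NeZero m] : MetricSpace (CeilMetric m X) where
  dist x y := ceilDist m x.val y.val
  dist_self x := ceilDist_self x.val
  dist_comm x y := ceilDist_comm x.val y.val
  dist_triangle x y z := ceilDist_triangle x.val y.val z.val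
  eq_of_dist_eq_zero {x y} h := by
    cases x; cases y
    simpa using eq_of_ceilDist_eq_zero (NeZero.ne m) h

theorem dist_mk [NeZero m] (x y : X) :
    dist (CeilMetric.mk (m := m) x) (CeilMetric.mk y) = ceilDist m x y := rfl

instance [Countable X] : Countable (CeilMetric m X) :=
  Function.Injective.countable (f := CeilMetric.val) fun a b h => by cases a; cases b; simpa using h

end CeilMetric

theorem EpsIndivisible.of_isometry_of_map {X Y : Type*} [MetricSpace X] [MetricSpace Y]
    {ε δ : ℝ} (hX : EpsIndivisible X ε) {f : Y → X} (hf : Isometry f) {g : X → Y}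
    (hg : ∀ (x x' : X) (y y' : Y), dist x x' = dist y y' → dist (g x) (g x') = dist y y')
    (hgδ : ∀ x x' : X, dist x x' ≤ ε → dist (g x) (g x') ≤ δ) :
    EpsIndivisible Y δ := by
  intro k hk χ
  obtain ⟨i, e, he, hclose⟩ := hX k hk (χ ∘ g)
  refine ⟨i, g ∘ e ∘ f, Isometry.of_dist_eq fun y y' => hg _ _ _ _ ?_, fun y => ?_⟩
  · simp only [Function.comp_apply, he.dist_eq, hf.dist_eq]
  · obtain ⟨x, hxi, hx⟩ := hclose (f y)
    exact ⟨g x, hxi, hgδ _ _ hx⟩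

/-- If `S_ℚ` is `ε`-indivisible then `S_m` is `1/m`-indivisible whenever
`m ≤ 1/ε`. -/
theorem stmt7 (ε : ℝ) (hε : 0 < ε)
    (SQ : Type) [MetricSpace SQ] (hSQ : IsRationalUrysohnSphere SQ)
    (hind : EpsIndivisible SQ ε)
    (m : ℕ) (hm : 0 < m) (hmε : (m : ℝ) ≤ 1/ε)
    (Sm : Type) [MetricSpace Sm] (hSm : IsUrysohnSphereM m Sm) :
    EpsIndivisible Sm (1/(m:ℝ)) := by
  have : NeZero m := ⟨hm.ne'⟩
  obtain ⟨hSQcount, -, hSQdist, hSQuniv⟩ := hSQ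
  obtain ⟨hSmcount, -, hSmdist, hSmuniv⟩ := hSm
  have hSQle : ∀ x y : SQ, dist x y ≤ 1 := fun x y => by
    obtain ⟨q, -, hq1, hq⟩ := hSQdist x y
    rw [hq]; exact_mod_cast hq1
  obtain ⟨f, hf⟩ := hSQuniv Sm hSmcount fun a b => exists_rat_of_mem_distSetM (hSmdist a b)
  obtain ⟨g, hg⟩ := hSmuniv (CeilMetric m SQ) inferInstance fun a b =>
    ceilDist_mem_distSetM (hSQle a.val b.val)
  have hεm : ε ≤ 1 / m := (le_one_div hε (by positivity)).mpr hmε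
  refine hind.of_isometry_of_map hf (g := fun x => g ⟨x⟩) (fun x x' y y' h => ?_) fun x x' h => ?_
  · rw [hg.dist_eq, CeilMetric.dist_mk, ceilDist_eq_dist_of_mem_distSetM (h ▸ hSmdist y y'), h]
  · rw [hg.dist_eq, CeilMetric.dist_mk]
    exact ceilDist_le_one_div (h.trans hεm)
end

section
/- A countable metric space X is ultrahomogeneous if and only if for every finite subspace F ⊆ X and every Katětov map f over F such that the one-point extension F ∪ {f} embeds isometrically into X (i.e., there exist an isometric embedding φ of F into X and a point z ∈ X with d(φ(x), z) = f(x) for all x ∈ F), there exists y ∈ X with d(x, y) = f(x) for every x ∈ F. -/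
open Metric

/-!
The forward direction is immediate: a self-isometry extending `φ` maps a point realizing `f`
over `F` back from `z`. Conversely, the hypothesis applied to distance functions
`x ↦ dist (g x) c` lets one extend a finite partial isometry `g` so that its domain contains
any given point (after inverting `g`) or its image contains any given point. Since `X` is
countable, a back-and-forth construction along these two families of cofinal sets produces a
surjective self-isometry extending the given one.
-/

variable {X : Type*} [MetricSpace X]

def RealizesEmbeddableKatetovMaps (X : Type*) [MetricSpace X] : Prop :=
  ∀ F : Set X, F.Finite → ∀ f : X → ℝ,
    (∀ x ∈ F, 0 < f x) →
    (∀ x ∈ F, ∀ x' ∈ F, |f x - f x'| ≤ dist x x' ∧ dist x x' ≤ f x + f x') →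
    (∃ (φ : F → X) (z : X), Isometry φ ∧ ∀ x : F, dist (φ x) z = f x) →
    ∃ y : X, ∀ x ∈ F, dist x y = f x

theorem IsUltrahomogeneous.realizesEmbeddableKatetovMaps (hX : IsUltrahomogeneous X) :
    RealizesEmbeddableKatetovMaps X := by
  rintro F hF f - - ⟨φ, z, hφ, hz⟩
  obtain ⟨ψ, hψ⟩ := hX F hF φ hφ
  refine ⟨ψ.symm z, fun x hx => ?_⟩
  rw [← hz ⟨x, hx⟩, ← hψ ⟨x, hx⟩, ← ψ.dist_eq, ψ.apply_symm_apply]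

structure FinitePartialIsometry (X : Type*) [MetricSpace X] where
  dom : Set X
  finite_dom : dom.Finite
  toFun : X → X
  dist_toFun : ∀ a ∈ dom, ∀ a' ∈ dom, dist (toFun a) (toFun a') = dist a a'

namespace FinitePartialIsometry

instance : Preorder (FinitePartialIsometry X) where
  le p q := p.dom ⊆ q.dom ∧ ∀ a ∈ p.dom, q.toFun a = p.toFun a
  le_refl _ := ⟨subset_rfl, fun _ _ => rfl⟩
  le_trans _ _ _ hpq hqr :=
    ⟨hpq.1.trans hqr.1, fun a ha => (hqr.2 a (hpq.1 ha)).trans (hpq.2 a ha)⟩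

variable (p : FinitePartialIsometry X)

theorem injOn_toFun : Set.InjOn p.toFun p.dom := fun a ha a' ha' h =>
  dist_eq_zero.mp <| by rw [← p.dist_toFun a ha a' ha', h, dist_self]

noncomputable def ofIsometry (F : Set X) (hF : F.Finite) (φ : F → X) (hφ : Isometry φ) :
    FinitePartialIsometry X where
  dom := F
  finite_dom := hF
  toFun := Function.extend Subtype.val φ id
  dist_toFun a ha a' ha' := by
    rw [Subtype.val_injective.extend_apply φ id ⟨a, ha⟩,
      Subtype.val_injective.extend_apply φ id ⟨a', ha'⟩, hφ.dist_eq, Subtype.dist_eq]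

theorem ofIsometry_toFun_coe (F : Set X) (hF : F.Finite) (φ : F → X) (hφ : Isometry φ)
    (x : F) : (ofIsometry F hF φ hφ).toFun x = φ x :=
  Subtype.val_injective.extend_apply φ id x

noncomputable def symm [Nonempty X] : FinitePartialIsometry X where
  dom := p.toFun '' p.dom
  finite_dom := p.finite_dom.image _
  toFun := Function.invFunOn p.toFun p.dom
  dist_toFun := by
    rintro _ ⟨a, ha, rfl⟩ _ ⟨a', ha', rfl⟩
    rw [p.injOn_toFun.leftInvOn_invFunOn ha, p.injOn_toFun.leftInvOn_invFunOn ha',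
      p.dist_toFun a ha a' ha']

theorem symm_toFun_toFun [Nonempty X] {a : X} (ha : a ∈ p.dom) :
    p.symm.toFun (p.toFun a) = a :=
  p.injOn_toFun.leftInvOn_invFunOn ha

section Insert

open scoped Classical

variable {p} {b y : X} (h : ∀ a ∈ p.dom, dist (p.toFun a) y = dist a b)
include h

/- If `b` is already in the domain, `h` at `a = b` forces `y = p.toFun b`,
so the update changes nothing. -/
theorem update_apply_of_mem {a : X} (ha : a ∈ p.dom) :
    Function.update p.toFun b y a = p.toFun a := by
  rcases eq_or_ne a b with rfl | hab
  · have := h a ha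
    rw [dist_self, dist_eq_zero] at this
    rw [Function.update_self, this]
  · exact Function.update_of_ne hab _ _

noncomputable def insert : FinitePartialIsometry X where
  dom := Insert.insert b p.dom
  finite_dom := p.finite_dom.insert b
  toFun := Function.update p.toFun b y
  dist_toFun := by
    rintro a (rfl | ha) a' (rfl | ha')
    · simp
    · rw [update_apply_of_mem h ha', Function.update_self, dist_comm, h a' ha', dist_comm]
    · rw [update_apply_of_mem h ha, Function.update_self, h a ha]
    · rw [update_apply_of_mem h ha, update_apply_of_mem h ha', p.dist_toFun a ha a' ha']

theorem le_insert : p ≤ insert h :=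
  ⟨Set.subset_insert _ _, fun _ ha => update_apply_of_mem h ha⟩

theorem mem_insert_dom : b ∈ (insert h).dom := Set.mem_insert _ _

theorem insert_toFun_self : (insert h).toFun b = y := by
  simp [insert]

end Insert

end FinitePartialIsometry

theorem abs_dist_sub_le_and_dist_le_add (x x' c : X) :
    |dist x c - dist x' c| ≤ dist x x' ∧ dist x x' ≤ dist x c + dist x' c :=
  ⟨abs_dist_sub_le x x' c, (dist_triangle x c x').trans_eq (by rw [dist_comm c x'])⟩

namespace RealizesEmbeddableKatetovMaps

open FinitePartialIsometry

variable (hX : RealizesEmbeddableKatetovMaps X) (p : FinitePartialIsometry X)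
include hX

theorem exists_dist_eq_dist_toFun (c : X) :
    ∃ y, ∀ a ∈ p.dom, dist a y = dist (p.toFun a) c := by
  by_cases hc : c ∈ p.toFun '' p.dom
  · obtain ⟨a₀, ha₀, rfl⟩ := hc
    exact ⟨a₀, fun a ha => (p.dist_toFun a ha a₀ ha₀).symm⟩
  refine hX p.dom p.finite_dom (fun a => dist (p.toFun a) c)
    (fun a ha => dist_pos.mpr fun e => hc ⟨a, ha, e⟩) (fun a ha a' ha' => ?_)
    ⟨fun a => p.toFun a, c, Isometry.of_dist_eq fun a a' => p.dist_toFun _ a.2 _ a'.2,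
      fun _ => rfl⟩
  rw [← p.dist_toFun a ha a' ha']
  exact abs_dist_sub_le_and_dist_le_add _ _ c

theorem exists_dist_toFun_eq (b : X) :
    ∃ y, ∀ a ∈ p.dom, dist (p.toFun a) y = dist a b := by
  have : Nonempty X := ⟨b⟩
  obtain ⟨y, hy⟩ := hX.exists_dist_eq_dist_toFun p.symm b
  refine ⟨y, fun a ha => ?_⟩
  rw [hy _ (Set.mem_image_of_mem _ ha), p.symm_toFun_toFun ha]

theorem isCofinal_mem_dom (b : X) : IsCofinal {q : FinitePartialIsometry X | b ∈ q.dom} :=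
  fun p =>
    let ⟨_, hy⟩ := hX.exists_dist_toFun_eq p b
    ⟨insert hy, mem_insert_dom hy, le_insert hy⟩

theorem isCofinal_mem_image (c : X) :
    IsCofinal {q : FinitePartialIsometry X | c ∈ q.toFun '' q.dom} := fun p => by
  obtain ⟨y, hy⟩ := hX.exists_dist_eq_dist_toFun p c
  have hy' : ∀ a ∈ p.dom, dist (p.toFun a) c = dist a y := fun a ha => (hy a ha).symm
  exact ⟨insert hy', ⟨y, mem_insert_dom hy', insert_toFun_self hy'⟩, le_insert hy'⟩

end RealizesEmbeddableKatetovMaps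

namespace FinitePartialIsometry

theorem exists_isometryEquiv_of_ideal (I : Order.Ideal (FinitePartialIsometry X))
    (hdom : ∀ b, ∃ q ∈ I, b ∈ q.dom) (himage : ∀ c, ∃ q ∈ I, c ∈ q.toFun '' q.dom) :
    ∃ ψ : X ≃ᵢ X, ∀ q ∈ I, ∀ a ∈ q.dom, ψ a = q.toFun a := by
  choose q hqI hq using hdom
  have toFun_eq : ∀ r ∈ I, ∀ x ∈ r.dom, (q x).toFun x = r.toFun x := fun r hr x hx => by
    obtain ⟨s, -, hqs, hrs⟩ := I.directed _ (hqI x) _ hr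
    rw [← hqs.2 x (hq x), hrs.2 x hx]
  have hiso : Isometry fun x => (q x).toFun x := Isometry.of_dist_eq fun x x' => by
    obtain ⟨s, hs, hxs, hx's⟩ := I.directed _ (hqI x) _ (hqI x')
    have hx := hxs.1 (hq x)
    have hx' := hx's.1 (hq x')
    rw [toFun_eq s hs x hx, toFun_eq s hs x' hx', s.dist_toFun x hx x' hx']
  have hsurj : Function.Surjective fun x => (q x).toFun x := fun c => by
    obtain ⟨r, hr, a, ha, rfl⟩ := himage c
    exact ⟨a, toFun_eq r hr a ha⟩
  exact ⟨⟨Equiv.ofBijective _ ⟨hiso.injective, hsurj⟩, hiso⟩, toFun_eq⟩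

end FinitePartialIsometry

open FinitePartialIsometry in
theorem RealizesEmbeddableKatetovMaps.exists_isometryEquiv [Countable X]
    (hX : RealizesEmbeddableKatetovMaps X) (p : FinitePartialIsometry X) :
    ∃ ψ : X ≃ᵢ X, ∀ a ∈ p.dom, ψ a = p.toFun a := by
  have := Encodable.ofCountable X
  let cofinals : X ⊕ X → Order.Cofinal (FinitePartialIsometry X) :=
    Sum.elim (fun b => ⟨_, hX.isCofinal_mem_dom b⟩) (fun c => ⟨_, hX.isCofinal_mem_image c⟩)
  let I := Order.idealOfCofinals p cofinals
  obtain ⟨ψ, hψ⟩ := exists_isometryEquiv_of_ideal I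
    (fun b => (Order.cofinal_meets_idealOfCofinals p cofinals (.inl b)).imp fun _ h => h.symm)
    (fun c => (Order.cofinal_meets_idealOfCofinals p cofinals (.inr c)).imp fun _ h => h.symm)
  exact ⟨ψ, hψ p (Order.mem_idealOfCofinals p cofinals)⟩

open FinitePartialIsometry in
theorem RealizesEmbeddableKatetovMaps.isUltrahomogeneous [Countable X]
    (hX : RealizesEmbeddableKatetovMaps X) : IsUltrahomogeneous X := fun F hF φ hφ => by
  obtain ⟨ψ, hψ⟩ := hX.exists_isometryEquiv (.ofIsometry F hF φ hφ)
  exact ⟨ψ, fun x => (hψ x x.2).trans (ofIsometry_toFun_coe F hF φ hφ x)⟩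

/-- A countable metric space is ultrahomogeneous iff every Katětov map over a
finite subspace which is realized somewhere in `X` is realized over that
subspace. -/
theorem stmt12 (X : Type) [MetricSpace X] (hX : Countable X) :
    IsUltrahomogeneous X ↔
    ∀ F : Set X, F.Finite → ∀ f : X → ℝ,
      (∀ x ∈ F, 0 < f x) →
      (∀ x ∈ F, ∀ x' ∈ F, |f x - f x'| ≤ dist x x' ∧ dist x x' ≤ f x + f x') →
      (∃ (φ : F → X) (z : X), Isometry φ ∧ ∀ x : F, dist (φ x) z = f x) →
      ∃ y : X, ∀ x ∈ F, dist x y = f x :=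
  ⟨IsUltrahomogeneous.realizesEmbeddableKatetovMaps,
    RealizesEmbeddableKatetovMaps.isUltrahomogeneous⟩
end

section
/- Let G be a countable simple graph with the Rado extension property: for all disjoint finite sets A and B of vertices there exists a vertex v ∉ A ∪ B adjacent to every vertex of A and to no vertex of B. Then G is indivisible: for every positive integer k and every map χ from the vertices of G to {0,…,k−1} there exist i < k and a set W of vertices with χ constant equal to i on W such that the induced subgraph of G on W is isomorphic to G. -/
/-!
Any two countable graphs with the extension property are isomorphic: the property says precisely
that a finite partial isomorphism into such a graph extends to one more point, so the
back-and-forth theorem `FirstOrder.Language.equiv_between_cg` applies in the language of graphs.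
It therefore suffices to find a colour class whose induced graph has the extension property. If
there were none, each colour `i` would have disjoint finite `Aᵢ, Bᵢ` in its class with no witness
in the class; a witness in `G` for `(⋃ Aᵢ, ⋃ Bᵢ)` has some colour `i` and is then a witness for
`(Aᵢ, Bᵢ)` in its own class.
-/

open Metric

open FirstOrder Language Substructure

namespace SimpleGraph

variable {V W : Type*} {G : SimpleGraph V} {H : SimpleGraph W}

def ExtensionProperty (G : SimpleGraph V) : Prop :=
  ∀ A B : Finset V, Disjoint A B →
    ∃ v : V, v ∉ A ∧ v ∉ B ∧ (∀ a ∈ A, G.Adj v a) ∧ ∀ b ∈ B, ¬ G.Adj v b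

theorem ExtensionProperty.exists_extend (hH : H.ExtensionProperty) {S T : Set V} {m : V}
    (hS : S.Finite) (hST : S ⊆ T) (hTS : T ⊆ insert m S) (f : G.induce S ↪g H) :
    ∃ g : G.induce T ↪g H, ∀ x : S, g (Set.inclusion hST x) = f x := by
  classical
  have := hS.fintype
  let A := (Finset.univ.filter fun s : S ↦ G.Adj m s).map f.toEmbedding
  let B := (Finset.univ.filter fun s : S ↦ ¬ G.Adj m s).map f.toEmbedding
  obtain ⟨v, hvA, hvB, hadj, hnadj⟩ :=
    hH A B ((Finset.disjoint_map _).2 (Finset.disjoint_filter_filter_not _ _ _))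
  have hv : ∀ s : S, f s ≠ v ∧ (H.Adj v (f s) ↔ G.Adj m s) := by
    intro s
    by_cases hs : G.Adj m s
    · have hsA : f s ∈ A := Finset.mem_map_of_mem _ (Finset.mem_filter.2 ⟨Finset.mem_univ _, hs⟩)
      exact ⟨ne_of_mem_of_not_mem hsA hvA, fun _ ↦ hs, fun _ ↦ hadj _ hsA⟩
    · have hsB : f s ∈ B := Finset.mem_map_of_mem _ (Finset.mem_filter.2 ⟨Finset.mem_univ _, hs⟩)
      exact ⟨ne_of_mem_of_not_mem hsB hvB, fun h ↦ absurd h (hnadj _ hsB), fun h ↦ absurd h hs⟩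
  have hm : ∀ x : T, (x : V) ∉ S → (x : V) = m := fun x hxS ↦ (hTS x.2).resolve_right hxS
  let g : T → W := fun x ↦ if h : (x : V) ∈ S then f ⟨x, h⟩ else v
  have hg_inj : g.Injective := by
    intro x y hxy
    by_cases hx : (x : V) ∈ S <;> by_cases hy : (y : V) ∈ S <;>
      simp only [g, hx, hy, dif_pos, dif_neg, not_false_eq_true] at hxy
    · exact Subtype.ext (congrArg Subtype.val (f.injective hxy) :)
    · exact absurd hxy (hv _).1
    · exact absurd hxy.symm (hv _).1
    · exact Subtype.ext ((hm x hx).trans (hm y hy).symm)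
  have hg_adj : ∀ x y : T, H.Adj (g x) (g y) ↔ G.Adj x y := by
    intro x y
    by_cases hx : (x : V) ∈ S <;> by_cases hy : (y : V) ∈ S <;>
      simp only [g, hx, hy, dif_pos, dif_neg, not_false_eq_true]
    · exact f.map_rel_iff
    · rw [H.adj_comm, G.adj_comm, hm y hy]; exact (hv _).2
    · rw [hm x hx]; exact (hv _).2
    · rw [hm x hx, hm y hy]; simp
  exact ⟨⟨⟨g, hg_inj⟩, hg_adj _ _⟩, fun x ↦ dif_pos x.2⟩

theorem ExtensionProperty.isExtensionPair (hH : H.ExtensionProperty) :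
    letI := G.structure; letI := H.structure; Language.graph.IsExtensionPair V W := by
  let := G.structure; let := H.structure
  rw [isExtensionPair_iff_exists_embedding_closure_singleton_sup]
  intro S hS φ m
  have hfin : (S : Set V).Finite := ((S.fg_iff_structure_fg).1 hS).finite
  let f : G.induce S ↪g H := ⟨φ.toEmbedding, φ.map_rel adj ![_, _]⟩
  have hsub :
      ((closure Language.graph {m} ⊔ S : Language.graph.Substructure V) : Set V) ⊆ insert m S := by
    rw [← closure_eq S, ← closure_insert, closure_eq_of_isRelational, closure_eq]
  obtain ⟨g, hg⟩ :=
    hH.exists_extend hfin (le_sup_right : S ≤ closure Language.graph {m} ⊔ S) hsub f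
  refine ⟨⟨g.toEmbedding, fun f ↦ isEmptyElim f, ?_⟩, ?_⟩
  · rintro _ ⟨⟩ x
    exact g.map_rel_iff
  · ext x
    exact (hg x).symm

theorem ExtensionProperty.nonempty_iso [Countable V] [Countable W] (hG : G.ExtensionProperty)
    (hH : H.ExtensionProperty) : Nonempty (G ≃g H) := by
  let := G.structure; let := H.structure
  -- provides the empty partial isomorphism `default` to start the back-and-forth from
  have : IsEmpty (Language.graph.Relations 0) := ⟨nofun⟩
  obtain ⟨e, -⟩ := equiv_between_cg Structure.cg_of_countable Structure.cg_of_countable default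
    hH.isExtensionPair hG.isExtensionPair
  exact ⟨⟨e.toEquiv, e.map_rel adj ![_, _]⟩⟩

theorem ExtensionProperty.exists_induce_fiber {ι : Type*} [Finite ι] (hG : G.ExtensionProperty)
    (χ : V → ι) : ∃ i, (G.induce {v | χ v = i}).ExtensionProperty := by
  classical
  have := Fintype.ofFinite ι
  by_contra! h
  simp only [ExtensionProperty, not_forall, not_exists, not_and, not_not] at h
  choose A B hAB hA using h
  let A' := Finset.univ.biUnion fun i ↦ (A i).map (Function.Embedding.subtype _)
  let B' := Finset.univ.biUnion fun i ↦ (B i).map (Function.Embedding.subtype _)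
  have hAB' : Disjoint A' B' := by
    simp only [A', B', Finset.disjoint_biUnion_left, Finset.disjoint_biUnion_right]
    intro i _ j _
    rw [Finset.disjoint_left]
    rintro _ hx hy
    obtain ⟨a, ha, rfl⟩ := Finset.mem_map.1 hx
    obtain ⟨b, hb, hba : (b : V) = a⟩ := Finset.mem_map.1 hy
    obtain rfl : i = j := b.2.symm.trans ((congrArg χ hba).trans a.2)
    exact Finset.disjoint_left.1 (hAB i) ha (Subtype.ext hba ▸ hb)
  obtain ⟨v, hvA, hvB, hadj, hnadj⟩ := hG A' B' hAB'
  have hA' : ∀ {i} {a : {v | χ v = i}}, a ∈ A i → (a : V) ∈ A' := fun ha ↦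
    Finset.mem_biUnion.2 ⟨_, Finset.mem_univ _, Finset.mem_map_of_mem _ ha⟩
  have hB' : ∀ {i} {b : {v | χ v = i}}, b ∈ B i → (b : V) ∈ B' := fun hb ↦
    Finset.mem_biUnion.2 ⟨_, Finset.mem_univ _, Finset.mem_map_of_mem _ hb⟩
  obtain ⟨b, hb, hvb⟩ := hA (χ v) ⟨v, rfl⟩ (fun h ↦ hvA (hA' h)) (fun h ↦ hvB (hB' h))
    fun a ha ↦ hadj _ (hA' ha)
  exact hnadj _ (hB' hb) hvb

end SimpleGraph

theorem stmt16_general (V : Type) [Countable V] (G : SimpleGraph V)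
    (hext : ∀ A B : Finset V, Disjoint A B →
      ∃ v : V, v ∉ A ∧ v ∉ B ∧ (∀ a ∈ A, G.Adj v a) ∧ ∀ b ∈ B, ¬ G.Adj v b)
    (k : ℕ) (χ : V → Fin k) :
    ∃ (i : Fin k) (W : Set V), (∀ w ∈ W, χ w = i) ∧
      Nonempty (G.induce W ≃g G) := by
  obtain ⟨i, hi⟩ := SimpleGraph.ExtensionProperty.exists_induce_fiber hext χ
  exact ⟨i, {v | χ v = i}, fun _ hw ↦ hw, hi.nonempty_iso hext⟩

/-- The Rado graph is indivisible: every countable graph with the Rado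
extension property is indivisible. -/
theorem stmt16 (V : Type) [Countable V] (G : SimpleGraph V)
    (hext : ∀ A B : Finset V, Disjoint A B →
      ∃ v : V, v ∉ A ∧ v ∉ B ∧ (∀ a ∈ A, G.Adj v a) ∧ ∀ b ∈ B, ¬ G.Adj v b)
    (k : ℕ) (hk : 0 < k) (χ : V → Fin k) :
    ∃ (i : Fin k) (W : Set V), (∀ w ∈ W, χ w = i) ∧
      Nonempty (G.induce W ≃g G) :=
  stmt16_general V G hext k χ
end

section
/- Let m be a positive integer, let S_Q be a rational Urysohn sphere, and let S_m be a countable ultrahomogeneous metric space with all distances in [0,1]_m into which every countable metric space with distances in [0,1]_m embeds isometrically. Assume that for every positive integer k and every map χ : S_Q → {0,…,k−1} there is a subset of S_Q isometric to S_m on which χ is constant. Then S_m is indivisible. -/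
open Metric

/-!
Round every distance of `S_ℚ` up to the grid `(1/m)ℤ`. Since `t ↦ ⌈m t⌉ / m` is monotone and
subadditive this is again a metric, now with values in `[0,1]_m`, so by universality the rounded
space embeds into `S_m` by some `g`. Rounding fixes distances already in `[0,1]_m`, hence `g` is
isometric on every copy of `S_m` inside `S_ℚ`. Colouring `S_ℚ` by `χ ∘ g` and taking a
monochromatic copy of `S_m` yields a monochromatic copy of `S_m` in `S_m`.
-/

noncomputable def roundUp (m : ℕ) (t : ℝ) : ℝ := ⌈m * t⌉ / m

section roundUp

variable {m : ℕ}

@[simp]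
lemma roundUp_zero : roundUp m 0 = 0 := by
  simp [roundUp]

lemma roundUp_mono : Monotone (roundUp m) := fun _ _ hst =>
  div_le_div_of_nonneg_right
    (Int.cast_le.mpr (Int.ceil_mono (mul_le_mul_of_nonneg_left hst m.cast_nonneg)))
    m.cast_nonneg

lemma roundUp_add_le (s t : ℝ) : roundUp m (s + t) ≤ roundUp m s + roundUp m t := by
  rw [roundUp, roundUp, roundUp, ← add_div, mul_add]
  exact div_le_div_of_nonneg_right (by exact_mod_cast Int.ceil_add_le _ _) m.cast_nonneg

lemma le_roundUp [NeZero m] (t : ℝ) : t ≤ roundUp m t := by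
  have hm : (0 : ℝ) < m := Nat.cast_pos.mpr (Nat.pos_of_neZero m)
  rw [roundUp, le_div_iff₀ hm, mul_comm]
  exact Int.le_ceil _

lemma roundUp_natCast_div [NeZero m] (k : ℕ) : roundUp m (k / m) = k / m := by
  have hm : (m : ℝ) ≠ 0 := NeZero.ne _
  rw [roundUp, mul_div_cancel₀ _ hm, Int.ceil_natCast, Int.cast_natCast]

lemma roundUp_eq_self_of_mem_distSetM [NeZero m] {t : ℝ} (ht : t ∈ distSetM m) :
    roundUp m t = t := by
  obtain ⟨k, -, rfl⟩ := ht
  exact roundUp_natCast_div k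

lemma roundUp_mem_distSetM {t : ℝ} (ht₀ : 0 ≤ t) (ht₁ : t ≤ 1) : roundUp m t ∈ distSetM m := by
  have hceil_nonneg : 0 ≤ ⌈(m : ℝ) * t⌉ := Int.ceil_nonneg (by positivity)
  have hceil_le : ⌈(m : ℝ) * t⌉ ≤ m := Int.ceil_le.mpr (by
    simpa using mul_le_mul_of_nonneg_left ht₁ m.cast_nonneg)
  refine ⟨⌈(m : ℝ) * t⌉.toNat, by omega, ?_⟩
  rw [roundUp]
  congr 1
  exact_mod_cast (Int.toNat_of_nonneg hceil_nonneg).symm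

end roundUp

def RoundUpMetric (_m : ℕ) (X : Type*) : Type _ := X

namespace RoundUpMetric

variable {m : ℕ} {X : Type*}

def of (m : ℕ) : X ≃ RoundUpMetric m X := Equiv.refl X

instance [Countable X] : Countable (RoundUpMetric m X) := ‹Countable X›

noncomputable instance [MetricSpace X] [NeZero m] : MetricSpace (RoundUpMetric m X) where
  dist x y := roundUp m (dist ((of m).symm x) ((of m).symm y))
  dist_self x := by simp
  dist_comm x y := by simp only [dist_comm]
  dist_triangle x y z :=
    (roundUp_mono (dist_triangle _ _ _)).trans (roundUp_add_le _ _)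
  eq_of_dist_eq_zero {x y} h :=
    (of m).symm.injective (dist_le_zero.mp ((le_roundUp _).trans_eq h))

variable [MetricSpace X] [NeZero m]

lemma dist_of (x y : X) : dist (of m x) (of m y) = roundUp m (dist x y) := rfl

lemma dist_mem_distSetM (hX : ∀ x y : X, dist x y ≤ 1) (x y : RoundUpMetric m X) :
    dist x y ∈ distSetM m :=
  roundUp_mem_distSetM dist_nonneg (hX _ _)

lemma dist_of_of_mem_distSetM {x y : X} (h : dist x y ∈ distSetM m) :
    dist (of m x) (of m y) = dist x y := by
  rw [dist_of, roundUp_eq_self_of_mem_distSetM h]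

end RoundUpMetric

open RoundUpMetric in
/-- If every finite coloring of `S_ℚ` admits a monochromatic copy of `S_m`,
then `S_m` is indivisible. -/
theorem stmt18 (m : ℕ) (hm : 0 < m)
    (SQ : Type) [MetricSpace SQ] (hSQ : IsRationalUrysohnSphere SQ)
    (Sm : Type) [MetricSpace Sm] (hSm : IsUrysohnSphereM m Sm)
    (h : ∀ k : ℕ, 0 < k → ∀ χ : SQ → Fin k,
      ∃ e : Sm → SQ, Isometry e ∧ ∃ i : Fin k, ∀ x : Sm, χ (e x) = i) :
    Indivisible Sm := by
  intro k hk χ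
  have : NeZero m := ⟨hm.ne'⟩
  obtain ⟨hSQ_countable, -, hSQ_dist, -⟩ := hSQ
  obtain ⟨-, -, hSm_dist, hSm_universal⟩ := hSm
  have hSQ_le_one (x y : SQ) : dist x y ≤ 1 := by
    obtain ⟨q, -, hq₁, hq⟩ := hSQ_dist x y
    exact hq ▸ by exact_mod_cast hq₁
  obtain ⟨g, hg⟩ := hSm_universal (RoundUpMetric m SQ) inferInstance
    (dist_mem_distSetM hSQ_le_one)
  obtain ⟨e, he, i, hei⟩ := h k hk (χ ∘ g ∘ of m)
  refine ⟨i, g ∘ of m ∘ e, Isometry.of_dist_eq fun a b => ?_, hei⟩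
  have hab : dist (e a) (e b) ∈ distSetM m := he.dist_eq a b ▸ hSm_dist a b
  simp only [Function.comp_apply, hg.dist_eq, dist_of_of_mem_distSetM hab, he.dist_eq]
end

section
/- Let m be a positive integer and let C_m be the set of continuous functions from the Cantor space 2^ℕ (with the product topology) to the finite set [0,1]_m ⊂ ℝ, equipped with the supremum metric d(f,g) = sup_{x ∈ 2^ℕ} |f(x) − g(x)|. Then C_m is a countable metric space, and every countable metric space with all distances in [0,1]_m embeds isometrically into C_m. -/
/-!
Distinct elements of `C_m` differ by at least `1/m` at some point, so `C_m` is a discrete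
subspace of the second countable space `C(2^ℕ, ℝ)`, hence countable.

For universality, enumerate `Y` as `u 0, u 1, …` and build the image of `u n` recursively, in
the manner of Katětov: it is a coordinate function `v n` of the Cantor space clamped between
`max_{j<n} (f j - d(u j, u n))` and `min_{j<n} (f j + d(u j, u n))`. The clamp makes
`|f i - f j| ≤ d(u i, u j)` pointwise. The coordinates `v n` use disjoint blocks of bits, so
they can take any prescribed `[0,1]_m`-values simultaneously; where `v n = d(u n, u b)` for all
`n`, the clamps are inactive and `f a - f b = d(u a, u b)`.
-/

open Metric

theorem mem_distSetM_iff {m : ℕ} (hm : 0 < m) {v : ℝ} :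
    v ∈ distSetM m ↔ v ∈ AddSubgroup.zmultiples ((m : ℝ)⁻¹) ∧ v ∈ Set.Icc 0 1 := by
  have hm' : (0 : ℝ) < m := by exact_mod_cast hm
  constructor
  · rintro ⟨k, hk, rfl⟩
    refine ⟨⟨k, by simp [div_eq_mul_inv]⟩, div_nonneg k.cast_nonneg hm'.le, ?_⟩
    rw [div_le_one hm']
    exact_mod_cast hk
  · rintro ⟨⟨k, rfl⟩, h0, h1⟩
    simp only [zsmul_eq_mul, ← div_eq_mul_inv] at h0 h1 ⊢
    rw [le_div_iff₀ hm', zero_mul] at h0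
    rw [div_le_one hm'] at h1
    have hk0 : 0 ≤ k := by exact_mod_cast h0
    have hkm : k ≤ m := by exact_mod_cast h1
    exact ⟨k.toNat, by omega, by
      rw [← Int.cast_natCast (k.toNat), Int.toNat_of_nonneg hk0]⟩

theorem inv_le_abs_sub_of_mem_distSetM {m : ℕ} {a b : ℝ} (ha : a ∈ distSetM m)
    (hb : b ∈ distSetM m) (hab : a ≠ b) : (m : ℝ)⁻¹ ≤ |a - b| := by
  obtain ⟨k, -, rfl⟩ := ha
  obtain ⟨l, -, rfl⟩ := hb
  have hkl : (1 : ℝ) ≤ |(k : ℝ) - l| := by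
    have : (k : ℤ) - l ≠ 0 := sub_ne_zero.2 fun h => hab (by rw [Nat.cast_inj.1 h])
    exact_mod_cast Int.one_le_abs this
  rw [← sub_div, abs_div, Nat.abs_cast, inv_eq_one_div]
  exact div_le_div_of_nonneg_right hkl m.cast_nonneg

theorem fold_mem_of_closed {ι β : Type*} {op : β → β → β} [Std.Commutative op]
    [Std.Associative op] {S : Set β} (hS : ∀ a ∈ S, ∀ b ∈ S, op a b ∈ S) {s : Finset ι}
    {b : β} {g : ι → β} (hb : b ∈ S) (hg : ∀ i ∈ s, g i ∈ S) :
    s.fold op b g ∈ S := by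
  induction s using Finset.cons_induction with
  | empty => simpa using hb
  | cons i s hi ih =>
    rw [Finset.fold_cons]
    exact hS _ (hg i (s.mem_cons_self i)) _ (ih fun j hj => hg j (Finset.mem_cons_of_mem hj))

theorem continuous_finset_fold {ι X β : Type*} [TopologicalSpace X] [TopologicalSpace β]
    {op : β → β → β} [Std.Commutative op] [Std.Associative op]
    (hop : Continuous fun p : β × β => op p.1 p.2) (s : Finset ι) (b : β) {g : ι → X → β}
    (hg : ∀ i ∈ s, Continuous (g i)) : Continuous fun x => s.fold op b fun i => g i x := by
  induction s using Finset.cons_induction with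
  | empty => simpa using continuous_const
  | cons i s hi ih =>
    simp only [Finset.fold_cons]
    exact hop.comp ((hg i (s.mem_cons_self i)).prodMk
      (ih fun j hj => hg j (Finset.mem_cons_of_mem hj)))

theorem ContinuousMap.dist_eq_of_forall_le {X E : Type*} [TopologicalSpace X] [CompactSpace X]
    [PseudoMetricSpace E] {f g : C(X, E)} {r : ℝ} (hle : ∀ x, dist (f x) (g x) ≤ r) (x₀ : X)
    (hx₀ : dist (f x₀) (g x₀) = r) : dist f g = r :=
  le_antisymm ((dist_le (hx₀ ▸ dist_nonneg)).2 hle) (hx₀ ▸ dist_apply_le_dist x₀)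

section Katetov

variable {X Y : Type*} [PseudoMetricSpace Y] (u : ℕ → Y) (v : ℕ → X → ℝ)

-- The two bounds are the extreme values at `n` that keep `j ↦ katetovSeq u v j x` inside `[0, 1]`
-- and `1`-Lipschitz along `u` on `{0, …, n}`; `v n x` is clamped between them.
noncomputable def katetovSeq : ℕ → X → ℝ
  | n, x => max (Finset.univ.fold max 0 fun j : Fin n => katetovSeq j x - dist (u j) (u n))
      (min (v n x) (Finset.univ.fold min 1 fun j : Fin n => katetovSeq j x + dist (u j) (u n)))

theorem katetovSeq_nonneg (n : ℕ) (x : X) : 0 ≤ katetovSeq u v n x := by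
  rw [katetovSeq]
  exact le_max_of_le_left ((Finset.le_fold_max _).2 (Or.inl le_rfl))

theorem katetovSeq_le_one (n : ℕ) (x : X) : katetovSeq u v n x ≤ 1 := by
  induction n using Nat.strong_induction_on with
  | _ n ih =>
    rw [katetovSeq]
    refine max_le ((Finset.fold_max_le _).2 ⟨zero_le_one, fun j _ => ?_⟩)
      ((min_le_right _ _).trans ((Finset.fold_min_le _).2 (Or.inl le_rfl)))
    linarith [ih j j.isLt, dist_nonneg (x := u j) (y := u n)]

theorem katetovSeq_mem_addSubgroup (G : AddSubgroup ℝ) (h1 : (1 : ℝ) ∈ G)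
    (hd : ∀ i j, dist (u i) (u j) ∈ G) (hv : ∀ n x, v n x ∈ G) (n : ℕ) (x : X) :
    katetovSeq u v n x ∈ G := by
  have hmax : ∀ a ∈ (G : Set ℝ), ∀ b ∈ (G : Set ℝ), max a b ∈ (G : Set ℝ) :=
    fun a ha b hb => by rcases max_choice a b with h | h <;> rw [h] <;> assumption
  have hmin : ∀ a ∈ (G : Set ℝ), ∀ b ∈ (G : Set ℝ), min a b ∈ (G : Set ℝ) :=
    fun a ha b hb => by rcases min_choice a b with h | h <;> rw [h] <;> assumption
  induction n using Nat.strong_induction_on with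
  | _ n ih =>
    rw [katetovSeq]
    refine hmax _ (fold_mem_of_closed hmax G.zero_mem fun (j : Fin n) _ =>
      G.sub_mem (ih j j.isLt) (hd j n)) _ (hmin _ (hv n x) _ (fold_mem_of_closed hmin h1
        fun (j : Fin n) _ => G.add_mem (ih j j.isLt) (hd j n)))

theorem continuous_katetovSeq [TopologicalSpace X] (hv : ∀ n, Continuous (v n)) (n : ℕ) :
    Continuous (katetovSeq u v n) := by
  induction n using Nat.strong_induction_on with
  | _ n ih =>
    simp only [funext (katetovSeq.eq_1 u v n)]
    exact (continuous_finset_fold continuous_max _ _ fun (j : Fin n) _ =>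
      (ih j j.isLt).sub continuous_const).max ((hv n).min
        (continuous_finset_fold continuous_min _ _ fun (j : Fin n) _ =>
          (ih j j.isLt).add continuous_const))

theorem abs_katetovSeq_sub_le_of_lt {n : ℕ} (x : X)
    (h : ∀ i j, i < n → j < n →
      |katetovSeq u v i x - katetovSeq u v j x| ≤ dist (u i) (u j))
    {j : ℕ} (hj : j < n) : |katetovSeq u v j x - katetovSeq u v n x| ≤ dist (u j) (u n) := by
  rw [abs_sub_le_iff]
  constructor
  · have : katetovSeq u v j x - dist (u j) (u n) ≤ katetovSeq u v n x := by
      rw [katetovSeq.eq_1 u v n]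
      exact le_max_of_le_left ((Finset.le_fold_max _).2
        (Or.inr ⟨⟨j, hj⟩, Finset.mem_univ _, le_rfl⟩))
    linarith
  · have : katetovSeq u v n x ≤ katetovSeq u v j x + dist (u j) (u n) := by
      rw [katetovSeq.eq_1 u v n]
      refine max_le ((Finset.fold_max_le _).2 ⟨?_, fun i _ => ?_⟩)
        ((min_le_right _ _).trans ((Finset.fold_min_le _).2
          (Or.inr ⟨⟨j, hj⟩, Finset.mem_univ _, le_rfl⟩)))
      · linarith [katetovSeq_nonneg u v j x, dist_nonneg (x := u j) (y := u n)]
      · linarith [(abs_le.1 (h i j i.isLt hj)).2, dist_triangle (u i) (u n) (u j),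
          dist_comm (u n) (u j)]
    linarith

theorem abs_katetovSeq_sub_le (i j : ℕ) (x : X) :
    |katetovSeq u v i x - katetovSeq u v j x| ≤ dist (u i) (u j) := by
  suffices ∀ n i j, i < n → j < n →
      |katetovSeq u v i x - katetovSeq u v j x| ≤ dist (u i) (u j) from
    this (max i j + 1) i j (by omega) (by omega)
  intro n
  induction n with
  | zero => intro i j hi; omega
  | succ n ih =>
    intro i j hi hj
    rcases Nat.lt_succ_iff_lt_or_eq.1 hi with hi | rfl <;>
      rcases Nat.lt_succ_iff_lt_or_eq.1 hj with hj | rfl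
    · exact ih i j hi hj
    · exact abs_katetovSeq_sub_le_of_lt u v x ih hi
    · rw [abs_sub_comm, dist_comm]
      exact abs_katetovSeq_sub_le_of_lt u v x ih hj
    · simp

theorem katetovSeq_eq_of_lipschitz {t : ℕ → ℝ} (ht : ∀ n, t n ∈ Set.Icc 0 1)
    (hlip : ∀ i j, t i - t j ≤ dist (u i) (u j)) {x : X} (hx : ∀ n, v n x = t n) (n : ℕ) :
    katetovSeq u v n x = t n := by
  induction n using Nat.strong_induction_on with
  | _ n ih =>
    have hlower : Finset.univ.fold max 0
        (fun j : Fin n => katetovSeq u v j x - dist (u j) (u n)) ≤ t n :=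
      (Finset.fold_max_le _).2 ⟨(ht n).1, fun (j : Fin n) _ => by
        linarith [ih j j.isLt, hlip j n]⟩
    have hupper : t n ≤ Finset.univ.fold min 1
        (fun j : Fin n => katetovSeq u v j x + dist (u j) (u n)) :=
      (Finset.le_fold_min _).2 ⟨(ht n).2, fun (j : Fin n) _ => by
        linarith [ih j j.isLt, hlip n j, dist_comm (u n) (u j)]⟩
    rw [katetovSeq, hx, min_eq_left hupper, max_eq_right hlower]

theorem katetovSeq_mem_distSetM {m : ℕ} (hm : 0 < m)
    (hd : ∀ i j, dist (u i) (u j) ∈ distSetM m) (hv : ∀ n x, v n x ∈ distSetM m) (n : ℕ)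
    (x : X) : katetovSeq u v n x ∈ distSetM m := by
  simp only [mem_distSetM_iff hm] at hd hv ⊢
  exact ⟨katetovSeq_mem_addSubgroup u v (.zmultiples (m : ℝ)⁻¹) ⟨m, by simp [hm.ne']⟩
    (fun i j => (hd i j).1) (fun n x => (hv n x).1) n x,
    katetovSeq_nonneg u v n x, katetovSeq_le_one u v n x⟩

end Katetov

noncomputable def cantorCode (m n : ℕ) (x : ℕ → Bool) : ℝ :=
  (Finset.univ.filter fun i : Fin m => x (Nat.pair n i)).card / m

theorem cantorCode_mem_distSetM (m n : ℕ) (x : ℕ → Bool) : cantorCode m n x ∈ distSetM m :=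
  ⟨_, (Finset.card_filter_le _ _).trans (Finset.card_fin m).le, rfl⟩

theorem continuous_cantorCode (m n : ℕ) : Continuous (cantorCode m n) :=
  continuous_of_discreteTopology
    (f := fun b : Fin m → Bool => ((Finset.univ.filter fun i => b i).card : ℝ) / m)
    |>.comp (continuous_pi fun i => continuous_apply (Nat.pair n i))

theorem exists_cantorCode_eq {m : ℕ} {t : ℕ → ℝ} (ht : ∀ n, t n ∈ distSetM m) :
    ∃ x : ℕ → Bool, ∀ n, cantorCode m n x = t n := by
  choose k hkm hk using ht
  refine ⟨fun c => decide (c.unpair.2 < k c.unpair.1), fun n => ?_⟩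
  simp only [cantorCode, Nat.unpair_pair, decide_eq_true_eq, Fin.card_filter_val_lt,
    min_eq_right (hkm n), hk]

abbrev CantorGridSpace (m : ℕ) : Type := {f : C(ℕ → Bool, ℝ) // ∀ x, f x ∈ distSetM m}

theorem countable_cantorGridSpace {m : ℕ} (hm : 0 < m) : Countable (CantorGridSpace m) := by
  have : DiscreteTopology (CantorGridSpace m) := by
    refine .of_forall_le_dist (inv_pos.2 (Nat.cast_pos.2 hm)) fun f g hfg => ?_
    obtain ⟨x, hx⟩ := DFunLike.ne_iff.1 (Subtype.coe_ne_coe.2 hfg)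
    calc (m : ℝ)⁻¹ ≤ dist (f.1 x) (g.1 x) :=
          inv_le_abs_sub_of_mem_distSetM (f.2 x) (g.2 x) hx
      _ ≤ dist f g := ContinuousMap.dist_apply_le_dist x
  exact TopologicalSpace.separableSpace_iff_countable.1 inferInstance

theorem exists_isometry_cantorGridSpace {m : ℕ} (hm : 0 < m) (Y : Type*) [PseudoMetricSpace Y]
    [Countable Y] (hY : ∀ a b : Y, dist a b ∈ distSetM m) :
    ∃ e : Y → CantorGridSpace m, Isometry e := by
  rcases isEmpty_or_nonempty Y with hY₀ | hY₀
  · exact ⟨isEmptyElim, isometry_subsingleton⟩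
  obtain ⟨u, hu⟩ := exists_surjective_nat Y
  let F : ℕ → CantorGridSpace m := fun n =>
    ⟨⟨katetovSeq u (cantorCode m) n, continuous_katetovSeq u _ (continuous_cantorCode m) n⟩,
      katetovSeq_mem_distSetM u _ hm (fun i j => hY _ _) (cantorCode_mem_distSetM m) n⟩
  have hF : ∀ a b, dist (F a) (F b) = dist (u a) (u b) := fun a b => by
    -- At a point coding `n ↦ dist (u n) (u b)` all clamps are inactive.
    obtain ⟨x, hx⟩ := exists_cantorCode_eq fun n => hY (u n) (u b)
    have hreal := katetovSeq_eq_of_lipschitz u (cantorCode m)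
      (fun n => ((mem_distSetM_iff hm).1 (hY (u n) (u b))).2)
      (fun i j => by linarith [dist_triangle (u i) (u j) (u b)]) hx
    refine ContinuousMap.dist_eq_of_forall_le (fun x => abs_katetovSeq_sub_le u _ a b x) x ?_
    simp [F, hreal]
  refine ⟨F ∘ Function.surjInv hu, Isometry.of_dist_eq fun y y' => ?_⟩
  simp only [Function.comp_apply, hF, Function.surjInv_eq hu]

/-- The space `C_m` of continuous maps from the Cantor space to `[0,1]_m` with
the sup metric is countable and universal for countable metric spaces with
distances in `[0,1]_m`. -/
theorem stmt19 (m : ℕ) (hm : 0 < m) :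
    Countable {f : C(ℕ → Bool, ℝ) // ∀ x : ℕ → Bool, f x ∈ distSetM m} ∧
    (∀ f g : {f : C(ℕ → Bool, ℝ) // ∀ x : ℕ → Bool, f x ∈ distSetM m},
      dist f g = ⨆ x : ℕ → Bool, |f.1 x - g.1 x|) ∧
    ∀ (Y : Type) [MetricSpace Y], Countable Y →
      (∀ a b : Y, dist a b ∈ distSetM m) →
      ∃ e : Y → {f : C(ℕ → Bool, ℝ) // ∀ x : ℕ → Bool, f x ∈ distSetM m},
        Isometry e := by
  refine ⟨countable_cantorGridSpace hm, fun f g => ?_, fun Y _ _ hY =>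
    exists_isometry_cantorGridSpace hm Y hY⟩
  simp only [Subtype.dist_eq, ContinuousMap.dist_eq_iSup, Real.dist_eq]
end
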